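/- arXiv:1912.10863 — 2 statements merged into one kernel-verified Lean document; each statement's English description precedes it below -/
import Mathlib

section
/- There is a constant C such that |σ(g ∘ h) − σ(g) − σ(h)| ≤ C for all g, h ∈ G_o; that is, σ : G_o → ℝ is a quasi-morphism. -/
open MeasureTheory Filter Topology Set Function Real

noncomputable section

/-- The closed unit disk in `ℝ²`. -/
def disk : Set (ℝ × ℝ) := {p | p.1 ^ 2 + p.2 ^ 2 ≤ 1}

/-- The boundary circle of the unit disk. -/
def bdry : Set (ℝ × ℝ) := {p | p.1 ^ 2 + p.2 ^ 2 = 1}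

/-- Partial derivative in the `x`-direction. -/
def pdx (f : ℝ × ℝ → ℝ) (p : ℝ × ℝ) : ℝ := fderiv ℝ f p (1, 0)

/-- Partial derivative in the `y`-direction. -/
def pdy (f : ℝ × ℝ → ℝ) (p : ℝ × ℝ) : ℝ := fderiv ℝ f p (0, 1)

/-- The Jacobian determinant of a map `ℝ² → ℝ²`. -/
def jacDet (g : ℝ × ℝ → ℝ × ℝ) (p : ℝ × ℝ) : ℝ :=
  pdx (fun q => (g q).1) p * pdy (fun q => (g q).2) p -
    pdy (fun q => (g q).1) p * pdx (fun q => (g q).2) p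

/-- `g` represents an element of `Symp(D)`: a `C^∞` diffeomorphism of the closed
unit disk onto itself (smooth up to the boundary, i.e. the restriction of a
globally smooth map with globally smooth inverse on the disk) whose Jacobian
determinant is identically `1` on the disk. -/
def IsSymp (g : ℝ × ℝ → ℝ × ℝ) : Prop :=
  ContDiff ℝ (⊤ : ℕ∞) g ∧ MapsTo g disk disk ∧ (∀ p ∈ disk, jacDet g p = 1) ∧
    ∃ g' : ℝ × ℝ → ℝ × ℝ, ContDiff ℝ (⊤ : ℕ∞) g' ∧ MapsTo g' disk disk ∧
      (∀ p ∈ disk, g' (g p) = p) ∧ (∀ p ∈ disk, g (g' p) = p)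

/-- `g` represents an element of `G_o`: a symplectomorphism of the disk fixing the origin. -/
def IsSympO (g : ℝ × ℝ → ℝ × ℝ) : Prop :=
  IsSymp g ∧ g (0, 0) = (0, 0)

/-- `τ_λ(g) = ∫_D g*λ ∧ λ` for `λ = (x dy - y dx)/2`, written out in coordinates. -/
def tauL (g : ℝ × ℝ → ℝ × ℝ) : ℝ :=
  (1 / 4) * ∫ p in disk,
    (p.1 * ((g p).1 * pdx (fun q => (g q).2) p - (g p).2 * pdx (fun q => (g q).1) p) +
     p.2 * ((g p).1 * pdy (fun q => (g q).2) p - (g p).2 * pdy (fun q => (g q).1) p))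

/-- `σ(g) = ∫_γ (g*λ - λ)` along the radial path `γ(t) = (t,0)`, in coordinates. -/
def sigmaQ (g : ℝ × ℝ → ℝ × ℝ) : ℝ :=
  (1 / 2) * ∫ t in (0:ℝ)..1,
    ((g (t, 0)).1 * pdx (fun q => (g q).2) (t, 0) -
      (g (t, 0)).2 * pdx (fun q => (g q).1) (t, 0))

/-- `G` is a smooth isotopy in `Symp(D)` starting at the identity. -/
def IsIsotopy (G : ℝ → ℝ × ℝ → ℝ × ℝ) : Prop :=
  ContDiff ℝ (⊤ : ℕ∞) (fun q : ℝ × (ℝ × ℝ) => G q.1 q.2) ∧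
    (∀ t ∈ Icc (0:ℝ) 1, IsSymp (G t)) ∧ (∀ p ∈ disk, G 0 p = p)

/-- `f` is a family of Hamiltonian functions for the isotopy `G`, i.e.
`i_{X_t} ω = d f_t` where `X_t = (∂g_t/∂t) ∘ g_t⁻¹`; since `g_t` maps the disk
onto itself this is expressed at the points `G t p`, `p ∈ D`. -/
def IsHam (G : ℝ → ℝ × ℝ → ℝ × ℝ) (f : ℝ → ℝ × ℝ → ℝ) : Prop :=
  ContDiff ℝ (⊤ : ℕ∞) (fun q : ℝ × (ℝ × ℝ) => f q.1 q.2) ∧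
    ∀ t ∈ Icc (0:ℝ) 1, ∀ p ∈ disk,
      pdx (f t) (G t p) = -(deriv (fun s => G s p) t).2 ∧
      pdy (f t) (G t p) = (deriv (fun s => G s p) t).1

/-- `φ` is the lift of the boundary isotopy of `G`, with `φ 0 = id`. -/
def IsBoundaryLift (G : ℝ → ℝ × ℝ → ℝ × ℝ) (φ : ℝ → ℝ → ℝ) : Prop :=
  ContDiff ℝ (⊤ : ℕ∞) (fun q : ℝ × ℝ => φ q.1 q.2) ∧
    (∀ t ∈ Icc (0:ℝ) 1, StrictMono (φ t) ∧ ∀ θ : ℝ, φ t (θ + 2 * π) = φ t θ + 2 * π) ∧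
    (∀ θ : ℝ, φ 0 θ = θ) ∧
    (∀ t ∈ Icc (0:ℝ) 1, ∀ θ : ℝ,
      G t (Real.cos θ, Real.sin θ) = (Real.cos (φ t θ), Real.sin (φ t θ)))

set_option maxHeartbeats 1000000

lemma smul_mem_disk {p : ℝ × ℝ} (hp : p ∈ disk) {s : ℝ} (hs : s ∈ Icc (0:ℝ) 1) :
    s • p ∈ disk := by
  simp only [disk, mem_setOf_eq, Prod.smul_fst, Prod.smul_snd, smul_eq_mul] at *
  obtain ⟨h0, h1⟩ := hs
  have hs2 : s ^ 2 ≤ 1 := by nlinarith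
  have h3 : s ^ 2 * (p.1 ^ 2 + p.2 ^ 2) ≤ s ^ 2 * 1 :=
    mul_le_mul_of_nonneg_left hp (sq_nonneg s)
  nlinarith

lemma clm_eval (L : ℝ × ℝ →L[ℝ] ℝ) (v : ℝ × ℝ) :
    L v = v.1 * L (1, 0) + v.2 * L (0, 1) := by
  have hv : v = v.1 • ((1:ℝ), (0:ℝ)) + v.2 • ((0:ℝ), (1:ℝ)) := by
    ext <;> simp
  rw [hv, L.map_add, L.map_smul, L.map_smul]
  simp [smul_eq_mul]

lemma deriv_eq_fderiv_one (δ : ℝ → ℝ × ℝ) : deriv δ = fun t => fderiv ℝ δ t 1 := by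
  funext t; rw [← fderiv_apply_one_eq_deriv]

lemma continuous_deriv_of_contDiff {δ : ℝ → ℝ × ℝ} (hδ : ContDiff ℝ 2 δ) :
    Continuous (deriv δ) := by
  rw [deriv_eq_fderiv_one]
  exact ((hδ.fderiv_right (m := 1) (by norm_num)).continuous).clm_apply continuous_const

/-- Fubini on the unit square for continuous integrands. -/
lemma fubini_square (F : ℝ → ℝ → ℝ) (hF : Continuous (fun q : ℝ × ℝ => F q.1 q.2)) :
    ∫ t in (0:ℝ)..1, (∫ s in (0:ℝ)..1, F s t)
      = ∫ s in (0:ℝ)..1, (∫ t in (0:ℝ)..1, F s t) := by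
  simp_rw [intervalIntegral.integral_of_le zero_le_one]
  have h1 : IntegrableOn (uncurry (fun t s => F s t)) (Ioc (0:ℝ) 1 ×ˢ Ioc (0:ℝ) 1)
      (volume : Measure (ℝ × ℝ)) := by
    refine MeasureTheory.IntegrableOn.mono_set (t := Icc (0:ℝ) 1 ×ˢ Icc (0:ℝ) 1) ?_
      (Set.prod_mono Ioc_subset_Icc_self Ioc_subset_Icc_self)
    exact ContinuousOn.integrableOn_compact (isCompact_Icc.prod isCompact_Icc)
      ((hF.comp continuous_swap).continuousOn)
  rw [MeasureTheory.Measure.volume_eq_prod, MeasureTheory.IntegrableOn,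
    ← MeasureTheory.Measure.prod_restrict] at h1
  exact MeasureTheory.integral_integral_swap h1

/-- Green/homotopy lemma. -/
lemma green (a b : ℝ × ℝ → ℝ) (δ : ℝ → ℝ × ℝ)
    (ha : ContDiff ℝ 2 a) (hb : ContDiff ℝ 2 b) (hδ : ContDiff ℝ 2 δ)
    (hmem : ∀ t ∈ Icc (0:ℝ) 1, δ t ∈ disk)
    (hcl : ∀ p ∈ disk, pdy a p = pdx b p) :
    ∫ t in (0:ℝ)..1, (a (δ t) * (deriv δ t).1 + b (δ t) * (deriv δ t).2)
      = (∫ s in (0:ℝ)..1, (a (s • δ 1) * (δ 1).1 + b (s • δ 1) * (δ 1).2))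
        - ∫ s in (0:ℝ)..1, (a (s • δ 0) * (δ 0).1 + b (s • δ 0) * (δ 0).2) := by
  classical
  have hdc : Continuous (deriv δ) := continuous_deriv_of_contDiff hδ
  set d : ℝ → ℝ × ℝ := deriv δ with hd_def
  have hδc : Continuous δ := hδ.continuous
  have hδdiff : ∀ t, HasDerivAt δ (d t) t := fun t =>
    ((hδ.differentiable (by norm_num)).differentiableAt).hasDerivAt
  have hadiff : Differentiable ℝ a := ha.differentiable (by norm_num)
  have hbdiff : Differentiable ℝ b := hb.differentiable (by norm_num)
  set D : ℝ → ℝ → ℝ := fun s t =>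
    (fderiv ℝ a (s • δ t)) (s • d t) * (δ t).1 + a (s • δ t) * (d t).1
      + ((fderiv ℝ b (s • δ t)) (s • d t) * (δ t).2 + b (s • δ t) * (d t).2) with hD_def
  set E : ℝ → ℝ → ℝ := fun s t => s * (a (s • δ t) * (d t).1 + b (s • δ t) * (d t).2)
    with hE_def
  set K : ℝ → ℝ → ℝ := fun s t => a (s • δ t) * (δ t).1 + b (s • δ t) * (δ t).2
    with hK_def
  have hDc : Continuous (fun q : ℝ × ℝ => D q.1 q.2) := by
    have hsc : Continuous (fun q : ℝ × ℝ => q.1 • δ q.2) :=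
      continuous_fst.smul (hδc.comp continuous_snd)
    have hsd : Continuous (fun q : ℝ × ℝ => q.1 • d q.2) :=
      continuous_fst.smul (hdc.comp continuous_snd)
    have hfa : Continuous (fun q : ℝ × ℝ => (fderiv ℝ a (q.1 • δ q.2)) (q.1 • d q.2)) :=
      ((ha.continuous_fderiv (by norm_num)).comp hsc).clm_apply hsd
    have hfb : Continuous (fun q : ℝ × ℝ => (fderiv ℝ b (q.1 • δ q.2)) (q.1 • d q.2)) :=
      ((hb.continuous_fderiv (by norm_num)).comp hsc).clm_apply hsd
    have hd1 : Continuous (fun q : ℝ × ℝ => (δ q.2).1) :=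
      continuous_fst.comp (hδc.comp continuous_snd)
    have hd2 : Continuous (fun q : ℝ × ℝ => (δ q.2).2) :=
      continuous_snd.comp (hδc.comp continuous_snd)
    have hdd1 : Continuous (fun q : ℝ × ℝ => (d q.2).1) :=
      continuous_fst.comp (hdc.comp continuous_snd)
    have hdd2 : Continuous (fun q : ℝ × ℝ => (d q.2).2) :=
      continuous_snd.comp (hdc.comp continuous_snd)
    have hac : Continuous (fun q : ℝ × ℝ => a (q.1 • δ q.2)) := ha.continuous.comp hsc
    have hbc : Continuous (fun q : ℝ × ℝ => b (q.1 • δ q.2)) := hb.continuous.comp hsc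
    exact ((hfa.mul hd1).add (hac.mul hdd1)).add ((hfb.mul hd2).add (hbc.mul hdd2))
  have hKderiv : ∀ (s t : ℝ), HasDerivAt (fun t' => K s t') (D s t) t := by
    intro s t
    have h1 : HasDerivAt (fun t' => s • δ t') (s • d t) t := (hδdiff t).const_smul s
    have h2 : HasDerivAt (fun t' => a (s • δ t'))
        ((fderiv ℝ a (s • δ t)) (s • d t)) t :=
      (hadiff (s • δ t)).hasFDerivAt.comp_hasDerivAt t h1
    have h3 : HasDerivAt (fun t' => b (s • δ t'))
        ((fderiv ℝ b (s • δ t)) (s • d t)) t :=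
      (hbdiff (s • δ t)).hasFDerivAt.comp_hasDerivAt t h1
    have h4 : HasDerivAt (fun t' => (δ t').1) (d t).1 t := (hδdiff t).fst
    have h5 : HasDerivAt (fun t' => (δ t').2) (d t).2 t := (hδdiff t).snd
    exact (h2.mul h4).add (h3.mul h5)
  have hEderiv : ∀ s ∈ Icc (0:ℝ) 1, ∀ t ∈ Icc (0:ℝ) 1,
      HasDerivAt (fun s' => E s' t) (D s t) s := by
    intro s hs t ht
    have hmemst : s • δ t ∈ disk := smul_mem_disk (hmem t ht) hs
    have h1 : HasDerivAt (fun s' : ℝ => s' • δ t) (δ t) s := by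
      simpa using (hasDerivAt_id s).smul_const (δ t)
    have h2 : HasDerivAt (fun s' => a (s' • δ t)) ((fderiv ℝ a (s • δ t)) (δ t)) s :=
      (hadiff (s • δ t)).hasFDerivAt.comp_hasDerivAt s h1
    have h3 : HasDerivAt (fun s' => b (s' • δ t)) ((fderiv ℝ b (s • δ t)) (δ t)) s :=
      (hbdiff (s • δ t)).hasFDerivAt.comp_hasDerivAt s h1
    have h6 : HasDerivAt (fun s' => E s' t)
        (1 * (a (s • δ t) * (d t).1 + b (s • δ t) * (d t).2)
          + s * ((fderiv ℝ a (s • δ t)) (δ t) * (d t).1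
                  + (fderiv ℝ b (s • δ t)) (δ t) * (d t).2)) s :=
      (hasDerivAt_id s).mul ((h2.mul_const _).add (h3.mul_const _))
    convert h6 using 1
    have hcl' := hcl _ hmemst
    have ea := clm_eval (fderiv ℝ a (s • δ t)) (s • d t)
    have eb := clm_eval (fderiv ℝ b (s • δ t)) (s • d t)
    have ea2 := clm_eval (fderiv ℝ a (s • δ t)) (δ t)
    have eb2 := clm_eval (fderiv ℝ b (s • δ t)) (δ t)
    have esd1 : (s • d t).1 = s * (d t).1 := rfl
    have esd2 : (s • d t).2 = s * (d t).2 := rfl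
    simp only [hD_def, ea, eb, ea2, eb2, esd1, esd2]
    simp only [pdx, pdy] at hcl'
    rw [hcl']
    ring
  have hinner : ∀ t ∈ Icc (0:ℝ) 1,
      ∫ s in (0:ℝ)..1, D s t = E 1 t - E 0 t := by
    intro t ht
    refine intervalIntegral.integral_eq_sub_of_hasDerivAt (f := fun s => E s t) ?_ ?_
    · intro s hs
      rw [uIcc_of_le zero_le_one] at hs
      exact hEderiv s hs t ht
    · exact ((hDc.comp (continuous_id.prodMk continuous_const)).intervalIntegrable 0 1)
  have houter : ∀ s : ℝ, ∫ t in (0:ℝ)..1, D s t = K s 1 - K s 0 := by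
    intro s
    refine intervalIntegral.integral_eq_sub_of_hasDerivAt (f := fun t => K s t) ?_ ?_
    · intro t _
      exact hKderiv s t
    · exact ((hDc.comp (continuous_const.prodMk continuous_id)).intervalIntegrable 0 1)
  have hswap : ∫ t in (0:ℝ)..1, (∫ s in (0:ℝ)..1, D s t)
      = ∫ s in (0:ℝ)..1, (∫ t in (0:ℝ)..1, D s t) := fubini_square D hDc
  have hKcont : ∀ t₀ : ℝ, Continuous (fun s => K s t₀) := by
    intro t₀
    have h1 : Continuous (fun s : ℝ => s • δ t₀) := continuous_id.smul continuous_const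
    exact ((ha.continuous.comp h1).mul continuous_const).add
      ((hb.continuous.comp h1).mul continuous_const)
  calc ∫ t in (0:ℝ)..1, (a (δ t) * (d t).1 + b (δ t) * (d t).2)
      = ∫ t in (0:ℝ)..1, (∫ s in (0:ℝ)..1, D s t) := by
        apply intervalIntegral.integral_congr
        intro t ht
        rw [uIcc_of_le zero_le_one] at ht
        beta_reduce
        rw [hinner t ht]
        simp [hE_def]
    _ = ∫ s in (0:ℝ)..1, (∫ t in (0:ℝ)..1, D s t) := hswap
    _ = ∫ s in (0:ℝ)..1, (K s 1 - K s 0) := by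
        apply intervalIntegral.integral_congr
        intro s _
        beta_reduce
        exact houter s
    _ = (∫ s in (0:ℝ)..1, K s 1) - ∫ s in (0:ℝ)..1, K s 0 :=
        intervalIntegral.integral_sub ((hKcont 1).intervalIntegrable 0 1)
          ((hKcont 0).intervalIntegrable 0 1)
    _ = _ := by simp only [hK_def]


lemma bdry_subset_disk : bdry ⊆ disk := fun p hp => le_of_eq hp

lemma not_disk_mem_nhds {p : ℝ × ℝ} (hp : p ∈ bdry) : ¬ disk ∈ 𝓝 p := by
  intro hmem
  have htend : Tendsto (fun n : ℕ => (1 + 1/(n+1) : ℝ) • p) atTop (𝓝 p) := by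
    have h1 : Tendsto (fun n : ℕ => (1 + 1/(n+1) : ℝ)) atTop (𝓝 1) := by
      have := tendsto_one_div_add_atTop_nhds_zero_nat (𝕜 := ℝ)
      have h2 := this.const_add (1:ℝ)
      simpa using h2
    simpa using h1.smul_const p
  have hev := htend.eventually_mem hmem
  obtain ⟨n, hn⟩ := hev.exists
  have hpn : (0:ℝ) < 1/(n+1) := by positivity
  simp only [disk, mem_setOf_eq, Prod.smul_fst, Prod.smul_snd, smul_eq_mul] at hn
  have hb : p.1 ^ 2 + p.2 ^ 2 = 1 := hp
  set e : ℝ := 1/(n+1) with he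
  have hexp : ((1 + e) * p.1) ^ 2 + ((1 + e) * p.2) ^ 2
      = (1 + e) ^ 2 * (p.1 ^ 2 + p.2 ^ 2) := by ring
  rw [hexp, hb, mul_one] at hn
  nlinarith [hpn, hn]

/-- A symplectomorphism of the disk maps the boundary circle into itself. -/
lemma isSymp_mapsTo_bdry {g : ℝ × ℝ → ℝ × ℝ} (hg : IsSymp g) :
    ∀ p ∈ bdry, g p ∈ bdry := by
  obtain ⟨hgs, hgm, _, g', hg's, hg'm, hlinv, hrinv⟩ := hg
  intro p hp
  have hpd : p ∈ disk := bdry_subset_disk hp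
  have hqd : g p ∈ disk := hgm hpd
  by_contra hqb
  -- then `g p` is in the interior of the disk
  have hlt : (g p).1 ^ 2 + (g p).2 ^ 2 < 1 :=
    lt_of_le_of_ne hqd (fun h => hqb h)
  have hopen : IsOpen {x : ℝ × ℝ | x.1 ^ 2 + x.2 ^ 2 < 1} := by
    have : Continuous fun x : ℝ × ℝ => x.1 ^ 2 + x.2 ^ 2 := by fun_prop
    exact isOpen_lt this continuous_const
  have hnhds : disk ∈ 𝓝 (g p) :=
    mem_of_superset (hopen.mem_nhds hlt) (by intro x hx; exact le_of_lt (a := x.1 ^ 2 + x.2 ^ 2) hx)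
  -- fderiv of g' at g p is invertible
  have hdg : Differentiable ℝ g := hgs.differentiable (by simp)
  have hdg' : Differentiable ℝ g' := hg's.differentiable (by simp)
  have hev : (g ∘ g') =ᶠ[𝓝 (g p)] id := by
    filter_upwards [hnhds] with x hx
    exact hrinv x hx
  have hcomp : fderiv ℝ (g ∘ g') (g p) = fderiv ℝ (id : ℝ × ℝ → ℝ × ℝ) (g p) :=
    hev.fderiv_eq
  have hchain : fderiv ℝ (g ∘ g') (g p)
      = (fderiv ℝ g (g' (g p))).comp (fderiv ℝ g' (g p)) :=
    fderiv_comp _ (hdg _) (hdg' _)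
  have hid : (fderiv ℝ g (g' (g p))).comp (fderiv ℝ g' (g p))
      = ContinuousLinearMap.id ℝ (ℝ × ℝ) := by
    rw [← hchain, hcomp, fderiv_id]
  set B := fderiv ℝ g' (g p) with hB
  have hBinj : Function.Injective B := by
    intro x y hxy
    have : (fderiv ℝ g (g' (g p))).comp B x = (fderiv ℝ g (g' (g p))).comp B y := by
      simp [ContinuousLinearMap.comp_apply, hxy]
    rw [hid] at this
    simpa using this
  have hBsurj : Function.Surjective B :=
    (LinearMap.injective_iff_surjective (f := (B : ℝ × ℝ →ₗ[ℝ] ℝ × ℝ))).mp hBinj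
  let eB : (ℝ × ℝ) ≃ₗ[ℝ] (ℝ × ℝ) :=
    LinearEquiv.ofBijective (B : ℝ × ℝ →ₗ[ℝ] ℝ × ℝ) ⟨hBinj, hBsurj⟩
  let eB' : (ℝ × ℝ) ≃L[ℝ] (ℝ × ℝ) := eB.toContinuousLinearEquiv
  have heB : (eB' : (ℝ × ℝ) →L[ℝ] (ℝ × ℝ)) = B := by
    rfl
  have hstrict : HasStrictFDerivAt g' (eB' : (ℝ × ℝ) →L[ℝ] (ℝ × ℝ)) (g p) := by
    rw [heB]
    exact (hg's.contDiffAt).hasStrictFDerivAt (by simp)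
  have hmap : Filter.map g' (𝓝 (g p)) = 𝓝 (g' (g p)) :=
    hstrict.map_nhds_eq_of_equiv
  have hgp : g' (g p) = p := hlinv p hpd
  have himg : g' '' disk ∈ 𝓝 p := by
    rw [← hgp, ← hmap]
    exact mem_map.mpr (mem_of_superset hnhds (subset_preimage_image g' disk))
  have hdisk_nhds : disk ∈ 𝓝 p :=
    mem_of_superset himg (hg'm.image_subset)
  exact not_disk_mem_nhds hp hdisk_nhds

lemma pdy_add {f h : ℝ × ℝ → ℝ} {p} (hf : DifferentiableAt ℝ f p)
    (hh : DifferentiableAt ℝ h p) :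
    pdy (fun q => f q + h q) p = pdy f p + pdy h p := by
  unfold pdy; rw [fderiv_fun_add hf hh]; simp

lemma pdx_sub {f h : ℝ × ℝ → ℝ} {p} (hf : DifferentiableAt ℝ f p)
    (hh : DifferentiableAt ℝ h p) :
    pdx (fun q => f q - h q) p = pdx f p - pdx h p := by
  unfold pdx; rw [fderiv_fun_sub hf hh]; simp

lemma pdy_sub {f h : ℝ × ℝ → ℝ} {p} (hf : DifferentiableAt ℝ f p)
    (hh : DifferentiableAt ℝ h p) :
    pdy (fun q => f q - h q) p = pdy f p - pdy h p := by
  unfold pdy; rw [fderiv_fun_sub hf hh]; simp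

lemma pdx_mul {f h : ℝ × ℝ → ℝ} {p} (hf : DifferentiableAt ℝ f p)
    (hh : DifferentiableAt ℝ h p) :
    pdx (fun q => f q * h q) p = pdx f p * h p + f p * pdx h p := by
  unfold pdx; rw [fderiv_fun_mul hf hh]; simp; ring

lemma pdy_mul {f h : ℝ × ℝ → ℝ} {p} (hf : DifferentiableAt ℝ f p)
    (hh : DifferentiableAt ℝ h p) :
    pdy (fun q => f q * h q) p = pdy f p * h p + f p * pdy h p := by
  unfold pdy; rw [fderiv_fun_mul hf hh]; simp; ring

lemma pdx_mul_const {f : ℝ × ℝ → ℝ} {p} (hf : DifferentiableAt ℝ f p) (c : ℝ) :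
    pdx (fun q => f q * c) p = pdx f p * c := by
  unfold pdx; rw [fderiv_mul_const hf]; simp [mul_comm]

lemma pdy_mul_const {f : ℝ × ℝ → ℝ} {p} (hf : DifferentiableAt ℝ f p) (c : ℝ) :
    pdy (fun q => f q * c) p = pdy f p * c := by
  unfold pdy; rw [fderiv_mul_const hf]; simp [mul_comm]

lemma pdx_fst {p : ℝ × ℝ} : pdx (fun q => q.1) p = 1 := by
  unfold pdx
  rw [show (fun q : ℝ × ℝ => q.1) = Prod.fst from rfl, fderiv_fst]
  simp

lemma pdy_snd {p : ℝ × ℝ} : pdy (fun q => q.2) p = 1 := by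
  unfold pdy
  rw [show (fun q : ℝ × ℝ => q.2) = Prod.snd from rfl, fderiv_snd]
  simp

/-- Symmetry of second partial derivatives for `C³` functions. -/
lemma pdy_pdx_symm {f : ℝ × ℝ → ℝ} (hf : ContDiff ℝ 3 f) (p : ℝ × ℝ) :
    pdy (pdx f) p = pdx (pdy f) p := by
  have h1 : ∀ y, HasFDerivAt f (fderiv ℝ f y) y := fun y =>
    ((hf.differentiable (by norm_num)) y).hasFDerivAt
  have hdf : Differentiable ℝ (fderiv ℝ f) :=
    (hf.fderiv_right (m := 2) (by norm_num)).differentiable (by norm_num)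
  have h2 : HasFDerivAt (fderiv ℝ f) (fderiv ℝ (fderiv ℝ f) p) p :=
    (hdf p).hasFDerivAt
  have hsymm := second_derivative_symmetric h1 h2
  have key : ∀ v w : ℝ × ℝ,
      fderiv ℝ (fun q => fderiv ℝ f q v) p w = (fderiv ℝ (fderiv ℝ f) p w) v := by
    intro v w
    have : fderiv ℝ (fun q => (fderiv ℝ f q) v) p
        = ((fderiv ℝ f p).comp (fderiv ℝ (fun _ : ℝ × ℝ => v) p))
          + (fderiv ℝ (fderiv ℝ f) p).flip v :=
      fderiv_clm_apply (hdf p) (differentiableAt_const v)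
    rw [this]
    simp
  unfold pdx pdy
  rw [key (1,0) (0,1), key (0,1) (1,0), hsymm]

/-- coefficients of the 1-form `g*λ - λ`. -/
def alphaA (g : ℝ × ℝ → ℝ × ℝ) (p : ℝ × ℝ) : ℝ :=
  ((g p).1 * pdx (fun q => (g q).2) p - (g p).2 * pdx (fun q => (g q).1) p) / 2 + p.2 / 2

def alphaB (g : ℝ × ℝ → ℝ × ℝ) (p : ℝ × ℝ) : ℝ :=
  ((g p).1 * pdy (fun q => (g q).2) p - (g p).2 * pdy (fun q => (g q).1) p) / 2 - p.1 / 2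

lemma contDiff_comp_fst {g : ℝ × ℝ → ℝ × ℝ} (hg : ContDiff ℝ (⊤ : ℕ∞) g) :
    ContDiff ℝ 3 (fun q => (g q).1) := (contDiff_fst.comp (hg.of_le (by exact WithTop.coe_le_coe.mpr le_top)))

lemma contDiff_comp_snd {g : ℝ × ℝ → ℝ × ℝ} (hg : ContDiff ℝ (⊤ : ℕ∞) g) :
    ContDiff ℝ 3 (fun q => (g q).2) := (contDiff_snd.comp (hg.of_le (by exact WithTop.coe_le_coe.mpr le_top)))

lemma contDiff_pdx {f : ℝ × ℝ → ℝ} (hf : ContDiff ℝ 3 f) : ContDiff ℝ 2 (pdx f) := by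
  exact (hf.fderiv_right (m := 2) (by norm_num)).clm_apply contDiff_const

lemma contDiff_pdy {f : ℝ × ℝ → ℝ} (hf : ContDiff ℝ 3 f) : ContDiff ℝ 2 (pdy f) := by
  exact (hf.fderiv_right (m := 2) (by norm_num)).clm_apply contDiff_const

lemma contDiff_alphaA {g : ℝ × ℝ → ℝ × ℝ} (hg : ContDiff ℝ (⊤ : ℕ∞) g) :
    ContDiff ℝ 2 (alphaA g) := by
  unfold alphaA
  exact ((((contDiff_comp_fst hg).of_le (by norm_num)).mul
      (contDiff_pdx (contDiff_comp_snd hg))).sub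
    (((contDiff_comp_snd hg).of_le (by norm_num)).mul
      (contDiff_pdx (contDiff_comp_fst hg)))).div_const 2 |>.add
    (contDiff_snd.div_const (2:ℝ))

lemma contDiff_alphaB {g : ℝ × ℝ → ℝ × ℝ} (hg : ContDiff ℝ (⊤ : ℕ∞) g) :
    ContDiff ℝ 2 (alphaB g) := by
  unfold alphaB
  exact ((((contDiff_comp_fst hg).of_le (by norm_num)).mul
      (contDiff_pdy (contDiff_comp_snd hg))).sub
    (((contDiff_comp_snd hg).of_le (by norm_num)).mul
      (contDiff_pdy (contDiff_comp_fst hg)))).div_const 2 |>.sub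
    (contDiff_fst.div_const (2:ℝ))

/-- Closedness of `g*λ - λ` where the Jacobian is 1. -/
lemma closed_alpha {g : ℝ × ℝ → ℝ × ℝ} (hg : ContDiff ℝ (⊤ : ℕ∞) g)
    {p : ℝ × ℝ} (hj : jacDet g p = 1) :
    pdy (alphaA g) p = pdx (alphaB g) p := by
  have hG1 : ContDiff ℝ 3 (fun q => (g q).1) := contDiff_comp_fst hg
  have hG2 : ContDiff ℝ 3 (fun q => (g q).2) := contDiff_comp_snd hg
  have dG1 : DifferentiableAt ℝ (fun q => (g q).1) p :=
    (hG1.differentiable (by norm_num)) p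
  have dG2 : DifferentiableAt ℝ (fun q => (g q).2) p :=
    (hG2.differentiable (by norm_num)) p
  have dA1 : DifferentiableAt ℝ (pdx fun q => (g q).1) p :=
    ((contDiff_pdx hG1).differentiable (by norm_num)) p
  have dA2 : DifferentiableAt ℝ (pdx fun q => (g q).2) p :=
    ((contDiff_pdx hG2).differentiable (by norm_num)) p
  have dB1 : DifferentiableAt ℝ (pdy fun q => (g q).1) p :=
    ((contDiff_pdy hG1).differentiable (by norm_num)) p
  have dB2 : DifferentiableAt ℝ (pdy fun q => (g q).2) p :=
    ((contDiff_pdy hG2).differentiable (by norm_num)) p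
  have hsym1 := pdy_pdx_symm hG1 p
  have hsym2 := pdy_pdx_symm hG2 p
  have dsnd : DifferentiableAt ℝ (fun q : ℝ × ℝ => q.2) p :=
    (contDiff_snd.differentiable (n := 1) one_ne_zero) p
  have dfst : DifferentiableAt ℝ (fun q : ℝ × ℝ => q.1) p :=
    (contDiff_fst.differentiable (n := 1) one_ne_zero) p
  unfold alphaA alphaB
  simp only [div_eq_mul_inv]
  rw [pdy_add (((dG1.fun_mul dA2).fun_sub (dG2.fun_mul dA1)).mul_const ((2:ℝ)⁻¹))
      (dsnd.mul_const ((2:ℝ)⁻¹)),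
    pdx_sub (((dG1.fun_mul dB2).fun_sub (dG2.fun_mul dB1)).mul_const ((2:ℝ)⁻¹))
      (dfst.mul_const ((2:ℝ)⁻¹)),
    pdy_mul_const ((dG1.fun_mul dA2).fun_sub (dG2.fun_mul dA1)),
    pdy_mul_const dsnd,
    pdx_mul_const ((dG1.fun_mul dB2).fun_sub (dG2.fun_mul dB1)),
    pdx_mul_const dfst,
    pdy_sub (dG1.fun_mul dA2) (dG2.fun_mul dA1), pdx_sub (dG1.fun_mul dB2) (dG2.fun_mul dB1),
    pdy_mul dG1 dA2, pdy_mul dG2 dA1, pdx_mul dG1 dB2, pdx_mul dG2 dB1,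
    pdy_snd, pdx_fst]
  unfold jacDet at hj
  rw [← hsym1, ← hsym2]
  ring_nf
  nlinarith [hj]



lemma fderiv_comp_fst_apply {h : ℝ × ℝ → ℝ × ℝ} {p v : ℝ × ℝ}
    (hh : DifferentiableAt ℝ h p) :
    fderiv ℝ (fun q => (h q).1) p v = (fderiv ℝ h p v).1 := by
  rw [(hh.hasFDerivAt.fst).fderiv]; rfl

lemma fderiv_comp_snd_apply {h : ℝ × ℝ → ℝ × ℝ} {p v : ℝ × ℝ}
    (hh : DifferentiableAt ℝ h p) :
    fderiv ℝ (fun q => (h q).2) p v = (fderiv ℝ h p v).2 := by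
  rw [(hh.hasFDerivAt.snd).fderiv]; rfl

lemma pdx_comp (f : ℝ × ℝ → ℝ) (h : ℝ × ℝ → ℝ × ℝ) (p : ℝ × ℝ)
    (hf : DifferentiableAt ℝ f (h p)) (hh : DifferentiableAt ℝ h p) :
    pdx (fun q => f (h q)) p
      = pdx f (h p) * pdx (fun q => (h q).1) p + pdy f (h p) * pdx (fun q => (h q).2) p := by
  unfold pdx pdy
  have hc : fderiv ℝ (f ∘ h) p = (fderiv ℝ f (h p)).comp (fderiv ℝ h p) :=
    fderiv_comp p hf hh
  have h1 : (fun q => f (h q)) = f ∘ h := rfl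
  rw [h1, hc, ContinuousLinearMap.comp_apply,
    clm_eval (fderiv ℝ f (h p)) (fderiv ℝ h p (1,0)),
    fderiv_comp_fst_apply hh, fderiv_comp_snd_apply hh]
  ring

/-- `σ(g)` as the line integral of `α_g` along the radial path. -/
lemma sigma_eq_line_integral {g : ℝ × ℝ → ℝ × ℝ} (_ : ContDiff ℝ (⊤ : ℕ∞) g) :
    sigmaQ g = ∫ t in (0:ℝ)..1,
      (alphaA g ((t:ℝ), (0:ℝ)) * (deriv (fun t : ℝ => ((t, 0) : ℝ × ℝ)) t).1
        + alphaB g ((t:ℝ), (0:ℝ)) * (deriv (fun t : ℝ => ((t, 0) : ℝ × ℝ)) t).2) := by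
  have hder : ∀ t : ℝ, deriv (fun t : ℝ => ((t, 0) : ℝ × ℝ)) t = (1, 0) := by
    intro t
    exact ((hasDerivAt_id t).prodMk (hasDerivAt_const t 0)).deriv
  unfold sigmaQ
  apply Eq.symm
  calc ∫ t in (0:ℝ)..1,
      (alphaA g ((t:ℝ), (0:ℝ)) * (deriv (fun t : ℝ => ((t, 0) : ℝ × ℝ)) t).1
        + alphaB g ((t:ℝ), (0:ℝ)) * (deriv (fun t : ℝ => ((t, 0) : ℝ × ℝ)) t).2)
      = ∫ t in (0:ℝ)..1, (1/2) * ((g (t, 0)).1 * pdx (fun q => (g q).2) (t, 0) -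
          (g (t, 0)).2 * pdx (fun q => (g q).1) (t, 0)) := by
        apply intervalIntegral.integral_congr
        intro t _
        beta_reduce
        rw [hder t]
        unfold alphaA alphaB
        simp only []
        ring
    _ = (1/2) * ∫ t in (0:ℝ)..1, ((g (t, 0)).1 * pdx (fun q => (g q).2) (t, 0) -
          (g (t, 0)).2 * pdx (fun q => (g q).1) (t, 0)) :=
        intervalIntegral.integral_const_mul _ _

/-- Decomposition of `σ(g ∘ h)`. -/
lemma sigma_comp_decomp {g h : ℝ × ℝ → ℝ × ℝ}
    (hg : ContDiff ℝ (⊤ : ℕ∞) g) (hh : ContDiff ℝ (⊤ : ℕ∞) h) :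
    sigmaQ (g ∘ h) = (∫ t in (0:ℝ)..1,
        (alphaA g (h (t, 0)) * (deriv (fun t : ℝ => h (t, 0)) t).1
          + alphaB g (h (t, 0)) * (deriv (fun t : ℝ => h (t, 0)) t).2))
      + sigmaQ h := by
  have hdg : Differentiable ℝ g := hg.differentiable (by simp)
  have hdh : Differentiable ℝ h := hh.differentiable (by simp)
  set δ : ℝ → ℝ × ℝ := fun t => h (t, 0) with hδ_def
  have hγ : ∀ t : ℝ, HasDerivAt (fun t : ℝ => ((t, 0) : ℝ × ℝ)) (1, 0) t := fun t =>
    (hasDerivAt_id t).prodMk (hasDerivAt_const t 0)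
  have hδder : ∀ t : ℝ, deriv δ t = fderiv ℝ h (t, 0) (1, 0) := by
    intro t
    exact ((hdh (t, 0)).hasFDerivAt.comp_hasDerivAt t (hγ t)).deriv
  have hd1 : ∀ t : ℝ, (deriv δ t).1 = pdx (fun q => (h q).1) (t, 0) := by
    intro t; rw [hδder t]; unfold pdx; rw [fderiv_comp_fst_apply (hdh (t,0))]
  have hd2 : ∀ t : ℝ, (deriv δ t).2 = pdx (fun q => (h q).2) (t, 0) := by
    intro t; rw [hδder t]; unfold pdx; rw [fderiv_comp_snd_apply (hdh (t,0))]
  -- pointwise identity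
  have hpoint : ∀ t : ℝ,
      ((g ∘ h) (t, 0)).1 * pdx (fun q => ((g ∘ h) q).2) (t, 0)
        - ((g ∘ h) (t, 0)).2 * pdx (fun q => ((g ∘ h) q).1) (t, 0)
      = 2 * (alphaA g (h (t, 0)) * (deriv δ t).1 + alphaB g (h (t, 0)) * (deriv δ t).2)
        + ((h (t, 0)).1 * pdx (fun q => (h q).2) (t, 0)
            - (h (t, 0)).2 * pdx (fun q => (h q).1) (t, 0)) := by
    intro t
    have e2 : pdx (fun q => ((g ∘ h) q).2) (t, 0)
        = pdx (fun r => (g r).2) (h (t,0)) * pdx (fun q => (h q).1) (t,0)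
          + pdy (fun r => (g r).2) (h (t,0)) * pdx (fun q => (h q).2) (t,0) := by
      have := pdx_comp (fun r => (g r).2) h (t, 0)
        ((contDiff_comp_snd hg).differentiable (by norm_num) (h (t,0)))
        (hdh (t,0))
      exact this
    have e1 : pdx (fun q => ((g ∘ h) q).1) (t, 0)
        = pdx (fun r => (g r).1) (h (t,0)) * pdx (fun q => (h q).1) (t,0)
          + pdy (fun r => (g r).1) (h (t,0)) * pdx (fun q => (h q).2) (t,0) := by
      have := pdx_comp (fun r => (g r).1) h (t, 0)
        ((contDiff_comp_fst hg).differentiable (by norm_num) (h (t,0)))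
        (hdh (t,0))
      exact this
    rw [e1, e2, hd1 t, hd2 t]
    unfold alphaA alphaB
    simp only [Function.comp_apply]
    ring
  -- continuity facts
  have hδcd : ContDiff ℝ 2 δ :=
    (hh.of_le (by exact WithTop.coe_le_coe.mpr le_top)).comp ((contDiff_id.prodMk contDiff_const) : ContDiff ℝ 2 fun t : ℝ => ((t,0) : ℝ × ℝ))
  have hδc : Continuous δ := hδcd.continuous
  have hdc : Continuous (deriv δ) := by
    have : deriv δ = fun t => fderiv ℝ δ t 1 := by
      funext t; rw [← fderiv_apply_one_eq_deriv]
    rw [this]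
    exact ((hδcd.fderiv_right (m := 1) (by norm_num)).continuous).clm_apply continuous_const
  have halphaAc : Continuous (alphaA g) := by
    unfold alphaA
    have := ((((contDiff_comp_fst hg).of_le (by norm_num : (2:WithTop ℕ∞) ≤ 3)).mul
        (contDiff_pdx (contDiff_comp_snd hg))).sub
      (((contDiff_comp_snd hg).of_le (by norm_num : (2:WithTop ℕ∞) ≤ 3)).mul
        (contDiff_pdx (contDiff_comp_fst hg)))).div_const (2:ℝ) |>.add
      (contDiff_snd.div_const (2:ℝ))
    exact this.continuous
  have halphaBc : Continuous (alphaB g) := by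
    unfold alphaB
    have := ((((contDiff_comp_fst hg).of_le (by norm_num : (2:WithTop ℕ∞) ≤ 3)).mul
        (contDiff_pdy (contDiff_comp_snd hg))).sub
      (((contDiff_comp_snd hg).of_le (by norm_num : (2:WithTop ℕ∞) ≤ 3)).mul
        (contDiff_pdy (contDiff_comp_fst hg)))).div_const (2:ℝ) |>.sub
      (contDiff_fst.div_const (2:ℝ))
    exact this.continuous
  have hAcont : Continuous (fun t => alphaA g (h (t, 0)) * (deriv δ t).1
      + alphaB g (h (t, 0)) * (deriv δ t).2) := by
    exact ((halphaAc.comp hδc).mul (continuous_fst.comp hdc)).add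
      ((halphaBc.comp hδc).mul (continuous_snd.comp hdc))
  have hγc : Continuous (fun t : ℝ => ((t, 0) : ℝ × ℝ)) := by fun_prop
  have hYcont : Continuous (fun t => (h (t, 0)).1 * pdx (fun q => (h q).2) (t, 0)
      - (h (t, 0)).2 * pdx (fun q => (h q).1) (t, 0)) := by
    have c1 : Continuous (pdx fun q => (h q).2) :=
      (contDiff_pdx (contDiff_comp_snd hh)).continuous
    have c2 : Continuous (pdx fun q => (h q).1) :=
      (contDiff_pdx (contDiff_comp_fst hh)).continuous
    exact (((continuous_fst.comp hδc)).mul (c1.comp hγc)).sub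
      (((continuous_snd.comp hδc)).mul (c2.comp hγc))
  -- integrate
  unfold sigmaQ
  have : ∫ t in (0:ℝ)..1,
      (((g ∘ h) (t, 0)).1 * pdx (fun q => ((g ∘ h) q).2) (t, 0)
        - ((g ∘ h) (t, 0)).2 * pdx (fun q => ((g ∘ h) q).1) (t, 0))
      = ∫ t in (0:ℝ)..1,
        (2 * (alphaA g (h (t, 0)) * (deriv δ t).1 + alphaB g (h (t, 0)) * (deriv δ t).2)
          + ((h (t, 0)).1 * pdx (fun q => (h q).2) (t, 0)
              - (h (t, 0)).2 * pdx (fun q => (h q).1) (t, 0))) := by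
    apply intervalIntegral.integral_congr
    intro t _
    beta_reduce
    exact hpoint t
  rw [this, intervalIntegral.integral_add ((hAcont.intervalIntegrable 0 1).const_mul 2)
    (hYcont.intervalIntegrable 0 1), intervalIntegral.integral_const_mul]
  ring



lemma winding_bound {g : ℝ × ℝ → ℝ × ℝ} (hg : ContDiff ℝ (⊤ : ℕ∞) g)
    (hmb : ∀ p ∈ bdry, g p ∈ bdry)
    (hinj : ∀ p ∈ disk, ∀ q ∈ disk, g p = g q → p = q)
    {Θ : ℝ} (hΘ : |Θ| ≤ π) :
    |∫ t in (0:ℝ)..1,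
        (alphaA g (Real.cos (Θ * t), Real.sin (Θ * t))
            * (deriv (fun t : ℝ => ((Real.cos (Θ * t), Real.sin (Θ * t)) : ℝ × ℝ)) t).1
          + alphaB g (Real.cos (Θ * t), Real.sin (Θ * t))
            * (deriv (fun t : ℝ => ((Real.cos (Θ * t), Real.sin (Θ * t)) : ℝ × ℝ)) t).2)|
      ≤ 2 * π := by
  have hπ : (0:ℝ) < π := Real.pi_pos
  set c : ℝ → ℝ × ℝ := fun t => (Real.cos (Θ * t), Real.sin (Θ * t)) with hc_def
  set dc : ℝ → ℝ × ℝ := fun t => (-Real.sin (Θ * t) * Θ, Real.cos (Θ * t) * Θ) with hdc_def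
  have hcmem : ∀ t : ℝ, c t ∈ bdry := by
    intro t
    show Real.cos (Θ * t) ^ 2 + Real.sin (Θ * t) ^ 2 = 1
    exact Real.cos_sq_add_sin_sq _
  have hcd : ∀ t : ℝ, HasDerivAt c (dc t) t := by
    intro t
    have h1 : HasDerivAt (fun t : ℝ => Θ * t) Θ t := by
      simpa using (hasDerivAt_id t).const_mul Θ
    exact ((Real.hasDerivAt_cos (Θ*t)).comp t h1).prodMk
      ((Real.hasDerivAt_sin (Θ*t)).comp t h1)
  have hdg : Differentiable ℝ g := hg.differentiable (by simp)
  set u : ℝ → ℝ × ℝ := fun t => g (c t) with hu_def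
  set u' : ℝ → ℝ × ℝ := fun t => fderiv ℝ g (c t) (dc t) with hu'_def
  have hud : ∀ t, HasDerivAt u (u' t) t := fun t =>
    (hdg (c t)).hasFDerivAt.comp_hasDerivAt t (hcd t)
  set v : ℝ → ℝ := fun t => (u t).1 * (u' t).2 - (u t).2 * (u' t).1 with hv_def
  have hcc : Continuous c := by fun_prop
  have hdcc : Continuous dc := by fun_prop
  have hvc : Continuous v := by
    have h1 : Continuous u := hg.continuous.comp hcc
    have h2 : Continuous u' :=
      (((hg.continuous_fderiv (by simp)).comp hcc).clm_apply hdcc)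
    exact ((continuous_fst.comp h1).mul (continuous_snd.comp h2)).sub
      ((continuous_snd.comp h1).mul (continuous_fst.comp h2))
  -- step 1 : integrand = v t / 2 - Θ / 2
  have hpoint : ∀ t : ℝ,
      alphaA g (c t) * (deriv c t).1 + alphaB g (c t) * (deriv c t).2
        = v t / 2 - Θ / 2 := by
    intro t
    rw [(hcd t).deriv]
    have e1 : (u' t).1 = (dc t).1 * pdx (fun q => (g q).1) (c t)
        + (dc t).2 * pdy (fun q => (g q).1) (c t) := by
      rw [hu'_def]
      beta_reduce
      rw [← fderiv_comp_fst_apply (hdg (c t)),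
        clm_eval (fderiv ℝ (fun q => (g q).1) (c t)) (dc t)]
      rfl
    have e2 : (u' t).2 = (dc t).1 * pdx (fun q => (g q).2) (c t)
        + (dc t).2 * pdy (fun q => (g q).2) (c t) := by
      rw [hu'_def]
      beta_reduce
      rw [← fderiv_comp_snd_apply (hdg (c t)),
        clm_eval (fderiv ℝ (fun q => (g q).2) (c t)) (dc t)]
      rfl
    have pyth : Real.sin (Θ*t) ^ 2 + Real.cos (Θ*t) ^ 2 = 1 :=
      Real.sin_sq_add_cos_sq _
    rw [hv_def]
    beta_reduce
    rw [e1, e2]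
    unfold alphaA alphaB
    have hc1 : (c t).1 = Real.cos (Θ*t) := rfl
    have hc2 : (c t).2 = Real.sin (Θ*t) := rfl
    have hd1 : (dc t).1 = -Real.sin (Θ * t) * Θ := rfl
    have hd2 : (dc t).2 = Real.cos (Θ * t) * Θ := rfl
    rw [hc1, hc2, hd1, hd2]
    linear_combination (-(Θ/2)) * pyth
  -- step 2 : the winding function
  set W : ℝ → ℝ := fun r => ∫ t in (0:ℝ)..r, v t with hW_def
  have hWd : ∀ r : ℝ, HasDerivAt W (v r) r := by
    intro r
    exact intervalIntegral.integral_hasDerivAt_right (hvc.intervalIntegrable 0 r)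
      (hvc.stronglyMeasurableAtFilter _ _) hvc.continuousAt
  have hWc : Continuous W := by
    rw [continuous_iff_continuousAt]; exact fun r => (hWd r).continuousAt
  have hW0 : W 0 = 0 := intervalIntegral.integral_same
  -- step 3 : z t = z 0 * exp (W t * I)
  set z : ℝ → ℂ := fun t => ((u t).1 : ℂ) + ((u t).2 : ℂ) * Complex.I with hz_def
  have hnorm : ∀ t, ((u t).1) ^ 2 + ((u t).2) ^ 2 = 1 := fun t => hmb (c t) (hcmem t)
  have hrel : ∀ t, (u t).1 * (u' t).1 + (u t).2 * (u' t).2 = 0 := by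
    intro t
    have hu1 : HasDerivAt (fun s => (u s).1) ((u' t).1) t := (hud t).fst
    have hu2 : HasDerivAt (fun s => (u s).2) ((u' t).2) t := (hud t).snd
    have hD : HasDerivAt (fun t => ((u t).1) ^ 2 + ((u t).2) ^ 2)
        (2 * (u t).1 ^ 1 * (u' t).1 + 2 * (u t).2 ^ 1 * (u' t).2) t := by
      exact (hu1.pow 2).add (hu2.pow 2)
    have hfun : (fun t => ((u t).1) ^ 2 + ((u t).2) ^ 2) = fun _ => (1:ℝ) :=
      funext hnorm
    rw [hfun] at hD
    have := hD.unique (hasDerivAt_const t 1)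
    nlinarith [this]
  have hzd : ∀ t, HasDerivAt z (((u' t).1 : ℂ) + ((u' t).2 : ℂ) * Complex.I) t := by
    intro t
    have hu1 : HasDerivAt (fun s => (u s).1) ((u' t).1) t := (hud t).fst
    have hu2 : HasDerivAt (fun s => (u s).2) ((u' t).2) t := (hud t).snd
    exact (hu1.ofReal_comp).add ((hu2.ofReal_comp).mul_const Complex.I)
  have hkey : ∀ t, ((u' t).1 : ℂ) + ((u' t).2 : ℂ) * Complex.I
      = Complex.I * (v t : ℂ) * z t := by
    intro t
    have h1 := hnorm t
    have h2 := hrel t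
    rw [hz_def, hv_def]
    beta_reduce
    apply Complex.ext <;> simp [Complex.mul_re, Complex.mul_im] <;> push_cast <;> ring_nf
    · linear_combination (-(u' t).1) * h1 + ((u t).1) * h2
    · linear_combination (-(u' t).2) * h1 + ((u t).2) * h2
  set f : ℝ → ℂ := fun t => z t * Complex.exp (-(W t : ℂ) * Complex.I) with hf_def
  have hfd : ∀ t, HasDerivAt f 0 t := by
    intro t
    have hwt : HasDerivAt (fun t => -(W t : ℂ) * Complex.I) (-(v t : ℂ) * Complex.I) t := by
      exact ((hWd t).ofReal_comp.neg).mul_const Complex.I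
    have hexp := hwt.cexp
    have hm := (hzd t).mul hexp
    refine hm.congr_deriv ?_
    rw [hkey t]
    ring
  have hfconst : ∀ t, f t = f 0 := by
    intro t
    exact is_const_of_deriv_eq_zero (fun s => (hfd s).differentiableAt)
      (fun s => (hfd s).deriv) t 0
  have hzfor : ∀ t, z t = z 0 * Complex.exp ((W t : ℂ) * Complex.I) := by
    intro t
    have h := hfconst t
    rw [hf_def] at h
    beta_reduce at h
    rw [hW0] at h
    simp only [Complex.ofReal_zero, neg_zero, zero_mul, Complex.exp_zero, mul_one] at h
    have hne : Complex.exp (-(W t : ℂ) * Complex.I) ≠ 0 := Complex.exp_ne_zero _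
    field_simp at h ⊢
    rw [← h, mul_assoc, ← Complex.exp_add]
    simp
  -- step 4 : |W 1| ≤ 2π
  have hWbound : |W 1| ≤ 2 * π := by
    rcases eq_or_ne Θ 0 with hΘ0 | hΘ0
    · have : v = fun _ => 0 := by
        funext t
        rw [hv_def, hu'_def]
        beta_reduce
        have : dc t = 0 := by
          rw [hdc_def]; beta_reduce
          rw [hΘ0]; simp
        rw [this]
        simp
      rw [hW_def]
      beta_reduce
      rw [this, intervalIntegral.integral_zero]
      simp only [abs_zero]
      positivity
    · -- contradiction machinery
      have habsΘ : 0 < |Θ| := abs_pos.mpr hΘ0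
      have hmain : ∀ t' ∈ Ioo (0:ℝ) 1, W t' ≠ 2*π ∧ W t' ≠ -(2*π) := by
        intro t' ht'
        have hcases : W t' = 2*π ∨ W t' = -(2*π) → False := by
          intro hcase
          have hexp1 : Complex.exp ((W t' : ℂ) * Complex.I) = 1 := by
            rcases hcase with hcase | hcase <;> rw [hcase]
            · push_cast
              exact Complex.exp_two_pi_mul_I
            · push_cast
              rw [show -(2*(π:ℂ)) * Complex.I = -(2*π*Complex.I) by ring,
                Complex.exp_neg, Complex.exp_two_pi_mul_I]
              simp
          have hzeq : z t' = z 0 := by rw [hzfor t', hexp1, mul_one]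
          have hueq : u t' = u 0 := by
            have hre := congrArg Complex.re hzeq
            have him := congrArg Complex.im hzeq
            rw [hz_def] at hre him
            simp at hre him
            exact Prod.ext hre him
          have hceq : c t' = c 0 := by
            exact hinj (c t') (bdry_subset_disk (hcmem t')) (c 0)
              (bdry_subset_disk (hcmem 0)) hueq
          have hcos : Real.cos (Θ * t') = 1 := by
            have := congrArg Prod.fst hceq
            simpa [hc_def] using this
          obtain ⟨n, hn⟩ := (Real.cos_eq_one_iff _).mp hcos
          have hlt : |Θ * t'| < π := by
            rw [abs_mul]
            calc |Θ| * |t'| < |Θ| * 1 := by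
                  apply mul_lt_mul_of_pos_left _ habsΘ
                  rw [abs_of_pos ht'.1]
                  exact ht'.2
              _ ≤ π := by rw [mul_one]; exact hΘ
          have hn0 : n = 0 := by
            by_contra hne
            have : (1:ℝ) ≤ |(n:ℝ)| := by
              have : (1:ℤ) ≤ |n| := Int.one_le_abs hne
              exact_mod_cast this
            have : 2*π ≤ |(n:ℝ) * (2*π)| := by
              rw [abs_mul, abs_of_pos (by positivity : (0:ℝ) < 2*π)]
              nlinarith
            rw [hn] at this
            nlinarith
          rw [hn0] at hn
          simp at hn
          rcases hn with hn | hn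
          · exact hΘ0 hn
          · exact (ne_of_gt ht'.1) hn
        constructor
        · intro h; exact hcases (Or.inl h)
        · intro h; exact hcases (Or.inr h)
      by_contra hgt
      push_neg at hgt
      rw [lt_abs] at hgt
      rcases hgt with hgt | hgt
      · -- W 1 > 2π, find t' with W t' = 2π
        have h2π : 2*π ∈ Ioo (W 0) (W 1) := by
          constructor
          · rw [hW0]; positivity
          · exact hgt
        obtain ⟨t', ht', hWt'⟩ := intermediate_value_Ioo zero_le_one hWc.continuousOn h2π
        exact (hmain t' ht').1 hWt'
      · -- -W1 > 2π i.e. W 1 < -(2π)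
        have h2π : -(2*π) ∈ Ioo (W 1) (W 0) := by
          constructor
          · linarith
          · rw [hW0]; simp; positivity
        obtain ⟨t', ht', hWt'⟩ := intermediate_value_Ioo' zero_le_one hWc.continuousOn h2π
        exact (hmain t' ht').2 hWt'
  -- step 5 : conclude
  have hintegral : ∫ t in (0:ℝ)..1,
      (alphaA g (c t) * (deriv c t).1 + alphaB g (c t) * (deriv c t).2)
      = W 1 / 2 - Θ / 2 := by
    have : ∫ t in (0:ℝ)..1,
        (alphaA g (c t) * (deriv c t).1 + alphaB g (c t) * (deriv c t).2)
        = ∫ t in (0:ℝ)..1, (v t / 2 - Θ / 2) := by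
      apply intervalIntegral.integral_congr
      intro t _
      beta_reduce
      exact hpoint t
    rw [this, intervalIntegral.integral_sub ((hvc.div_const 2).intervalIntegrable 0 1)
      (intervalIntegrable_const), intervalIntegral.integral_div,
      intervalIntegral.integral_const]
    rw [hW_def]
    simp
  calc |∫ t in (0:ℝ)..1,
      (alphaA g (c t) * (deriv c t).1 + alphaB g (c t) * (deriv c t).2)|
      = |W 1 / 2 - Θ / 2| := by rw [hintegral]
    _ ≤ |W 1 / 2| + |Θ / 2| := abs_sub _ _
    _ ≤ π + π / 2 := by
        apply add_le_add
        · rw [abs_div]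
          simp only [abs_two]
          linarith [hWbound]
        · rw [abs_div]
          simp only [abs_two]
          linarith [hΘ]
    _ ≤ 2 * π := by linarith

/-- `σ : G_o → ℝ` is a quasi-morphism: there is a constant `C`
with `|σ(g ∘ h) - σ(g) - σ(h)| ≤ C` for all `g, h ∈ G_o`. -/
theorem sigma_quasimorphism :
    ∃ C : ℝ, ∀ g h : ℝ × ℝ → ℝ × ℝ, IsSympO g → IsSympO h →
      |sigmaQ (g ∘ h) - sigmaQ g - sigmaQ h| ≤ C := by
  refine ⟨2 * π, ?_⟩
  intro g h hgO hhO
  obtain ⟨hgI, hg0⟩ := hgO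
  obtain ⟨hhI, hh0⟩ := hhO
  have hgs : ContDiff ℝ (⊤ : ℕ∞) g := hgI.1
  have hhs : ContDiff ℝ (⊤ : ℕ∞) h := hhI.1
  have hgj : ∀ p ∈ disk, jacDet g p = 1 := hgI.2.2.1
  have hhm : MapsTo h disk disk := hhI.2.1
  obtain ⟨g', hg's, hg'm, hglinv, hgrinv⟩ := hgI.2.2.2
  have ha : ContDiff ℝ 2 (alphaA g) := contDiff_alphaA hgs
  have hbb : ContDiff ℝ 2 (alphaB g) := contDiff_alphaB hgs
  have hcl : ∀ p ∈ disk, pdy (alphaA g) p = pdx (alphaB g) p := fun p hp =>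
    closed_alpha hgs (hgj p hp)
  have hinj : ∀ p ∈ disk, ∀ r ∈ disk, g p = g r → p = r := by
    intro p hp r hr he
    have h1 := hglinv p hp
    have h2 := hglinv r hr
    rw [← h1, ← h2, he]
  have hmb : ∀ p ∈ bdry, g p ∈ bdry := isSymp_mapsTo_bdry hgI
  -- the boundary point q = h(1,0) and its angle Θ
  have h10bd : ((1:ℝ), (0:ℝ)) ∈ bdry := by
    show (1:ℝ)^2 + (0:ℝ)^2 = 1; norm_num
  have hqbd : h ((1:ℝ), (0:ℝ)) ∈ bdry := isSymp_mapsTo_bdry hhI _ h10bd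
  set q : ℝ × ℝ := h ((1:ℝ), (0:ℝ)) with hq_def
  have hq : q.1 ^ 2 + q.2 ^ 2 = 1 := hqbd
  set zq : ℂ := (q.1 : ℂ) + (q.2 : ℂ) * Complex.I with hzq_def
  have habs : ‖zq‖ = 1 := by
    rw [hzq_def, Complex.norm_def, Complex.normSq_add_mul_I, hq]
    exact Real.sqrt_one
  have hzq0 : zq ≠ 0 := by
    intro h0; rw [h0] at habs; simp at habs
  set Θ : ℝ := Complex.arg zq with hΘ_def
  have hΘπ : |Θ| ≤ π := Complex.abs_arg_le_pi zq
  have hcos : Real.cos Θ = q.1 := by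
    have hh1 := Complex.cos_arg hzq0
    rw [habs] at hh1
    simpa [hzq_def] using hh1
  have hsin : Real.sin Θ = q.2 := by
    have hh1 := Complex.sin_arg zq
    rw [habs] at hh1
    simpa [hzq_def] using hh1
  -- the three paths
  have hγcd : ContDiff ℝ 2 (fun t : ℝ => ((t, 0) : ℝ × ℝ)) :=
    contDiff_id.prodMk contDiff_const
  have hγmem : ∀ t ∈ Icc (0:ℝ) 1, ((t, 0) : ℝ × ℝ) ∈ disk := by
    intro t ht
    show t^2 + (0:ℝ)^2 ≤ 1
    nlinarith [ht.1, ht.2]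
  have G1 := green (alphaA g) (alphaB g) (fun t => ((t, 0) : ℝ × ℝ)) ha hbb hγcd
    (fun t ht => hγmem t ht) hcl
  have hσg := sigma_eq_line_integral hgs
  have hδcd : ContDiff ℝ 2 (fun t : ℝ => h (t, 0)) := (hhs.of_le (by exact WithTop.coe_le_coe.mpr le_top)).comp hγcd
  have hδmem : ∀ t ∈ Icc (0:ℝ) 1, h (t, 0) ∈ disk := fun t ht => hhm (hγmem t ht)
  have G2 := green (alphaA g) (alphaB g) (fun t => h (t, 0)) ha hbb hδcd
    (fun t ht => hδmem t ht) hcl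
  have hccd : ContDiff ℝ 2 (fun t : ℝ => ((Real.cos (Θ*t), Real.sin (Θ*t)) : ℝ × ℝ)) := by
    exact ((Real.contDiff_cos.of_le (by exact le_rfl)).comp (contDiff_const.mul contDiff_id)).prodMk
      ((Real.contDiff_sin.of_le (by exact le_rfl)).comp (contDiff_const.mul contDiff_id))
  have hcmem : ∀ t ∈ Icc (0:ℝ) 1, ((Real.cos (Θ*t), Real.sin (Θ*t)) : ℝ × ℝ) ∈ disk := by
    intro t _
    apply bdry_subset_disk
    show Real.cos (Θ*t)^2 + Real.sin (Θ*t)^2 = 1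
    exact Real.cos_sq_add_sin_sq _
  have G3 := green (alphaA g) (alphaB g)
    (fun t => ((Real.cos (Θ*t), Real.sin (Θ*t)) : ℝ × ℝ)) ha hbb hccd
    (fun t ht => hcmem t ht) hcl
  have hdecomp := sigma_comp_decomp hgs hhs
  have hwind := winding_bound hgs hmb hinj hΘπ
  -- endpoint normalizations
  have e_c1 : ((Real.cos (Θ*1), Real.sin (Θ*1)) : ℝ × ℝ) = q := by
    rw [mul_one]
    exact Prod.ext (by rw [hcos]) (by rw [hsin])
  have e_c0 : ((Real.cos (Θ*0), Real.sin (Θ*0)) : ℝ × ℝ) = ((1:ℝ), (0:ℝ)) := by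
    norm_num
  simp only [mul_one, mul_zero, Real.cos_zero, Real.sin_zero] at G3
  rw [hcos, hsin] at G3
  simp only [Prod.mk.eta] at G3
  simp only [hh0] at G2
  rw [← hq_def] at G2
  simp only [Prod.smul_mk, smul_eq_mul, mul_one, mul_zero, Prod.fst, Prod.snd,
    add_zero, zero_add, sub_zero] at G1 G2 G3
  simp only [intervalIntegral.integral_zero] at G1 G2 G3
  have key : sigmaQ (g ∘ h) - sigmaQ g - sigmaQ h
      = ∫ (t : ℝ) in (0:ℝ)..1,
          (alphaA g (Real.cos (Θ * t), Real.sin (Θ * t))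
              * (deriv (fun t => ((Real.cos (Θ * t), Real.sin (Θ * t)) : ℝ × ℝ)) t).1
            + alphaB g (Real.cos (Θ * t), Real.sin (Θ * t))
              * (deriv (fun t => ((Real.cos (Θ * t), Real.sin (Θ * t)) : ℝ × ℝ)) t).2) := by
    rw [hdecomp, hσg, G1, G2, G3]
    ring
  rw [key]
  exact hwind
end
end

section
/- Let (g_t)_{t∈[0,1]} be a smooth isotopy in G_o with g_0 = id (so g_t(0,0) = (0,0) for all t), let f_t be the associated Hamiltonian functions normalized by f_t(0,0) = 0, let S((g_t)) = ∫₀¹ f_t(1,0) dt, and let φ̃ be the lift of the boundary isotopy with φ̃_0 = id. Then σ(g₁) − S((g_t)) = φ̃₁(0)/2. -/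
open MeasureTheory Filter Topology Set Function Real

noncomputable section

namespace Stmt11

/-! ### Generic calculus helpers -/

lemma clm_eval (L : ℝ × ℝ →L[ℝ] ℝ) (a b : ℝ) : L (a, b) = a * L (1, 0) + b * L (0, 1) := by
  have h : (a, b) = a • ((1:ℝ), (0:ℝ)) + b • ((0:ℝ), (1:ℝ)) := by simp [Prod.ext_iff]
  rw [h, map_add, _root_.map_smul, _root_.map_smul, smul_eq_mul, smul_eq_mul]

lemma contDiff_pdx {F : ℝ × ℝ → ℝ} (hF : ContDiff ℝ (⊤ : ℕ∞) F) : ContDiff ℝ (⊤ : ℕ∞) (pdx F) :=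
  (hF.fderiv_right (by simp)).clm_apply contDiff_const

lemma contDiff_pdy {F : ℝ × ℝ → ℝ} (hF : ContDiff ℝ (⊤ : ℕ∞) F) : ContDiff ℝ (⊤ : ℕ∞) (pdy F) :=
  (hF.fderiv_right (by simp)).clm_apply contDiff_const

section
variable {E : Type*} [NormedAddCommGroup E] [NormedSpace ℝ E]

lemma slice1 {F : ℝ × ℝ → E} {t s : ℝ} (hF : DifferentiableAt ℝ F (t, s)) :
    HasDerivAt (fun t' => F (t', s)) (fderiv ℝ F (t, s) (1, 0)) t :=
  hF.hasFDerivAt.comp_hasDerivAt t ((hasDerivAt_id t).prodMk (hasDerivAt_const t s))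

lemma slice2 {F : ℝ × ℝ → E} {t s : ℝ} (hF : DifferentiableAt ℝ F (t, s)) :
    HasDerivAt (fun s' => F (t, s')) (fderiv ℝ F (t, s) (0, 1)) s :=
  hF.hasFDerivAt.comp_hasDerivAt s ((hasDerivAt_const s t).prodMk (hasDerivAt_id s))

end

lemma pdx_eq {Φ : ℝ × ℝ → ℝ} {t s D : ℝ} (hΦ : DifferentiableAt ℝ Φ (t, s))
    (h : HasDerivAt (fun t' => Φ (t', s)) D t) : pdx Φ (t, s) = D :=
  (slice1 hΦ).unique h

lemma pdy_eq {Φ : ℝ × ℝ → ℝ} {t s D : ℝ} (hΦ : DifferentiableAt ℝ Φ (t, s))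
    (h : HasDerivAt (fun s' => Φ (t, s')) D s) : pdy Φ (t, s) = D :=
  (slice2 hΦ).unique h

lemma clairaut {F : ℝ × ℝ → ℝ} (hF : ContDiff ℝ (⊤ : ℕ∞) F) (p : ℝ × ℝ) :
    pdx (pdy F) p = pdy (pdx F) p := by
  have hd : Differentiable ℝ F := hF.differentiable (by simp)
  have hf' : ∀ y, HasFDerivAt F (fderiv ℝ F y) y := fun y => (hd y).hasFDerivAt
  have h2 : DifferentiableAt ℝ (fderiv ℝ F) p :=
    ((hF.fderiv_right (m := (⊤ : ℕ∞)) (by simp)).differentiable (by simp)) p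
  have hx : HasFDerivAt (fderiv ℝ F) (fderiv ℝ (fderiv ℝ F) p) p := h2.hasFDerivAt
  have sym := second_derivative_symmetric hf' hx ((1:ℝ),(0:ℝ)) ((0:ℝ),(1:ℝ))
  have e1 : HasFDerivAt (fun q => fderiv ℝ F q ((0:ℝ),(1:ℝ)))
      ((ContinuousLinearMap.apply ℝ ℝ ((0:ℝ),(1:ℝ))).comp (fderiv ℝ (fderiv ℝ F) p)) p :=
    (ContinuousLinearMap.apply ℝ ℝ ((0:ℝ),(1:ℝ))).hasFDerivAt.comp p hx
  have e2 : HasFDerivAt (fun q => fderiv ℝ F q ((1:ℝ),(0:ℝ)))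
      ((ContinuousLinearMap.apply ℝ ℝ ((1:ℝ),(0:ℝ))).comp (fderiv ℝ (fderiv ℝ F) p)) p :=
    (ContinuousLinearMap.apply ℝ ℝ ((1:ℝ),(0:ℝ))).hasFDerivAt.comp p hx
  show fderiv ℝ (fun q => fderiv ℝ F q ((0:ℝ),(1:ℝ))) p (1,0)
      = fderiv ℝ (fun q => fderiv ℝ F q ((1:ℝ),(0:ℝ))) p (0,1)
  rw [e1.fderiv, e2.fderiv]
  simpa using sym

/-! ### The basic functions -/

def uu (G : ℝ → ℝ × ℝ → ℝ × ℝ) : ℝ × ℝ → ℝ := fun p => (G p.1 (p.2, 0)).1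

def vv (G : ℝ → ℝ × ℝ → ℝ × ℝ) : ℝ × ℝ → ℝ := fun p => (G p.1 (p.2, 0)).2

def EE (G : ℝ → ℝ × ℝ → ℝ × ℝ) (f : ℝ → ℝ × ℝ → ℝ) : ℝ × ℝ → ℝ :=
  fun p => f p.1 (G p.1 (p.2, 0))

def HH (G : ℝ → ℝ × ℝ → ℝ × ℝ) : ℝ × ℝ → ℝ :=
  fun p => uu G p * pdy (vv G) p - vv G p * pdy (uu G) p

def BB (G : ℝ → ℝ × ℝ → ℝ × ℝ) (f : ℝ → ℝ × ℝ → ℝ) : ℝ × ℝ → ℝ :=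
  fun p => 2 * EE G f p + (uu G p * pdx (vv G) p - vv G p * pdx (uu G) p)

section main

variable {G : ℝ → ℝ × ℝ → ℝ × ℝ} {f : ℝ → ℝ × ℝ → ℝ}

lemma contDiff_inner : ContDiff ℝ (⊤ : ℕ∞) (fun p : ℝ × ℝ => (p.1, ((p.2, (0:ℝ)) : ℝ × ℝ))) :=
  contDiff_fst.prodMk (contDiff_snd.prodMk contDiff_const)

lemma contDiff_uu (hG : ContDiff ℝ (⊤ : ℕ∞) (fun q : ℝ × (ℝ × ℝ) => G q.1 q.2)) :
    ContDiff ℝ (⊤ : ℕ∞) (uu G) :=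
  contDiff_fst.comp (hG.comp contDiff_inner)

lemma contDiff_vv (hG : ContDiff ℝ (⊤ : ℕ∞) (fun q : ℝ × (ℝ × ℝ) => G q.1 q.2)) :
    ContDiff ℝ (⊤ : ℕ∞) (vv G) :=
  contDiff_snd.comp (hG.comp contDiff_inner)

lemma contDiff_EE (hG : ContDiff ℝ (⊤ : ℕ∞) (fun q : ℝ × (ℝ × ℝ) => G q.1 q.2))
    (hf : ContDiff ℝ (⊤ : ℕ∞) (fun q : ℝ × (ℝ × ℝ) => f q.1 q.2)) :
    ContDiff ℝ (⊤ : ℕ∞) (EE G f) :=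
  hf.comp (contDiff_fst.prodMk (hG.comp contDiff_inner))

lemma contDiff_HH (hG : ContDiff ℝ (⊤ : ℕ∞) (fun q : ℝ × (ℝ × ℝ) => G q.1 q.2)) :
    ContDiff ℝ (⊤ : ℕ∞) (HH G) :=
  ((contDiff_uu hG).mul (contDiff_pdy (contDiff_vv hG))).sub
    ((contDiff_vv hG).mul (contDiff_pdy (contDiff_uu hG)))

lemma contDiff_BB (hG : ContDiff ℝ (⊤ : ℕ∞) (fun q : ℝ × (ℝ × ℝ) => G q.1 q.2))
    (hf : ContDiff ℝ (⊤ : ℕ∞) (fun q : ℝ × (ℝ × ℝ) => f q.1 q.2)) :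
    ContDiff ℝ (⊤ : ℕ∞) (BB G f) :=
  (contDiff_const.mul (contDiff_EE hG hf)).add
    (((contDiff_uu hG).mul (contDiff_pdx (contDiff_vv hG))).sub
      ((contDiff_vv hG).mul (contDiff_pdx (contDiff_uu hG))))

lemma contDiff_Gt (hG : ContDiff ℝ (⊤ : ℕ∞) (fun q : ℝ × (ℝ × ℝ) => G q.1 q.2)) (t : ℝ) :
    ContDiff ℝ (⊤ : ℕ∞) (G t) :=
  hG.comp (contDiff_const.prodMk contDiff_id)

lemma contDiff_ft (hf : ContDiff ℝ (⊤ : ℕ∞) (fun q : ℝ × (ℝ × ℝ) => f q.1 q.2)) (t : ℝ) :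
    ContDiff ℝ (⊤ : ℕ∞) (f t) :=
  hf.comp (contDiff_const.prodMk contDiff_id)


lemma hasDerivAt_time (hG : ContDiff ℝ (⊤ : ℕ∞) (fun q : ℝ × (ℝ × ℝ) => G q.1 q.2)) (t s : ℝ) :
    HasDerivAt (fun t' => G t' ((s : ℝ), (0 : ℝ)))
      ((pdx (uu G) (t, s), pdx (vv G) (t, s)) : ℝ × ℝ) t := by
  have h1 : HasDerivAt (fun t' => uu G (t', s)) (pdx (uu G) (t, s)) t :=
    slice1 (((contDiff_uu hG).differentiable (by simp)) (t, s))
  have h2 : HasDerivAt (fun t' => vv G (t', s)) (pdx (vv G) (t, s)) t :=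
    slice1 (((contDiff_vv hG).differentiable (by simp)) (t, s))
  exact h1.prodMk h2

lemma hasDerivAt_space (hG : ContDiff ℝ (⊤ : ℕ∞) (fun q : ℝ × (ℝ × ℝ) => G q.1 q.2)) (t s : ℝ) :
    HasDerivAt (fun s' => G t ((s' : ℝ), (0 : ℝ)))
      ((pdy (uu G) (t, s), pdy (vv G) (t, s)) : ℝ × ℝ) s := by
  have h1 : HasDerivAt (fun s' => uu G (t, s')) (pdy (uu G) (t, s)) s :=
    slice2 (((contDiff_uu hG).differentiable (by simp)) (t, s))
  have h2 : HasDerivAt (fun s' => vv G (t, s')) (pdy (vv G) (t, s)) s :=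
    slice2 (((contDiff_vv hG).differentiable (by simp)) (t, s))
  exact h1.prodMk h2

lemma ham_x (hG : ContDiff ℝ (⊤ : ℕ∞) (fun q : ℝ × (ℝ × ℝ) => G q.1 q.2))
    (hfH : ∀ t ∈ Icc (0:ℝ) 1, ∀ p ∈ disk,
      pdx (f t) (G t p) = -(deriv (fun s => G s p) t).2 ∧
      pdy (f t) (G t p) = (deriv (fun s => G s p) t).1)
    {t s : ℝ} (ht : t ∈ Icc (0:ℝ) 1) (hs : ((s : ℝ), (0:ℝ)) ∈ disk) :
    pdx (f t) (G t (s, 0)) = -(pdx (vv G) (t, s)) ∧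
      pdy (f t) (G t (s, 0)) = pdx (uu G) (t, s) := by
  have hd := (hasDerivAt_time hG t s).deriv
  have h := hfH t ht (s, 0) hs
  rw [hd] at h
  exact h

lemma pdy_EE (hG : ContDiff ℝ (⊤ : ℕ∞) (fun q : ℝ × (ℝ × ℝ) => G q.1 q.2))
    (hf : ContDiff ℝ (⊤ : ℕ∞) (fun q : ℝ × (ℝ × ℝ) => f q.1 q.2))
    (hfH : ∀ t ∈ Icc (0:ℝ) 1, ∀ p ∈ disk,
      pdx (f t) (G t p) = -(deriv (fun s => G s p) t).2 ∧
      pdy (f t) (G t p) = (deriv (fun s => G s p) t).1)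
    {t s : ℝ} (ht : t ∈ Icc (0:ℝ) 1) (hs : ((s : ℝ), (0:ℝ)) ∈ disk) :
    pdy (EE G f) (t, s) =
      pdx (uu G) (t, s) * pdy (vv G) (t, s) - pdx (vv G) (t, s) * pdy (uu G) (t, s) := by
  have hft : DifferentiableAt ℝ (f t) (G t (s, 0)) :=
    ((contDiff_ft hf t).differentiable (by simp)) _
  have hcomp : HasDerivAt (fun s' => EE G f (t, s'))
      (fderiv ℝ (f t) (G t (s, 0)) ((pdy (uu G) (t, s), pdy (vv G) (t, s)) : ℝ × ℝ)) s :=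
    hft.hasFDerivAt.comp_hasDerivAt (l := f t) s (hasDerivAt_space hG t s)
  have hval : fderiv ℝ (f t) (G t (s, 0)) ((pdy (uu G) (t, s), pdy (vv G) (t, s)) : ℝ × ℝ)
      = pdy (uu G) (t, s) * pdx (f t) (G t (s, 0)) + pdy (vv G) (t, s) * pdy (f t) (G t (s, 0)) :=
    clm_eval _ _ _
  obtain ⟨hx, hy⟩ := ham_x hG hfH ht hs
  rw [hval, hx, hy] at hcomp
  have := pdy_eq (((contDiff_EE hG hf).differentiable (by simp)) (t, s)) hcomp
  rw [this]; ring

lemma pdx_HH (hG : ContDiff ℝ (⊤ : ℕ∞) (fun q : ℝ × (ℝ × ℝ) => G q.1 q.2)) (t s : ℝ) :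
    pdx (HH G) (t, s) =
      pdx (uu G) (t, s) * pdy (vv G) (t, s) + uu G (t, s) * pdx (pdy (vv G)) (t, s)
        - (pdx (vv G) (t, s) * pdy (uu G) (t, s) + vv G (t, s) * pdx (pdy (uu G)) (t, s)) := by
  have du : HasDerivAt (fun t' => uu G (t', s)) (pdx (uu G) (t, s)) t :=
    slice1 (((contDiff_uu hG).differentiable (by simp)) (t, s))
  have dv : HasDerivAt (fun t' => vv G (t', s)) (pdx (vv G) (t, s)) t :=
    slice1 (((contDiff_vv hG).differentiable (by simp)) (t, s))
  have dpu : HasDerivAt (fun t' => pdy (uu G) (t', s)) (pdx (pdy (uu G)) (t, s)) t :=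
    slice1 (((contDiff_pdy (contDiff_uu hG)).differentiable (by simp)) (t, s))
  have dpv : HasDerivAt (fun t' => pdy (vv G) (t', s)) (pdx (pdy (vv G)) (t, s)) t :=
    slice1 (((contDiff_pdy (contDiff_vv hG)).differentiable (by simp)) (t, s))
  exact pdx_eq (((contDiff_HH hG).differentiable (by simp)) (t, s)) ((du.mul dpv).sub (dv.mul dpu))

lemma pdy_BB (hG : ContDiff ℝ (⊤ : ℕ∞) (fun q : ℝ × (ℝ × ℝ) => G q.1 q.2))
    (hf : ContDiff ℝ (⊤ : ℕ∞) (fun q : ℝ × (ℝ × ℝ) => f q.1 q.2)) (t s : ℝ) :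
    pdy (BB G f) (t, s) =
      2 * pdy (EE G f) (t, s) +
      (pdy (uu G) (t, s) * pdx (vv G) (t, s) + uu G (t, s) * pdy (pdx (vv G)) (t, s)
        - (pdy (vv G) (t, s) * pdx (uu G) (t, s) + vv G (t, s) * pdy (pdx (uu G)) (t, s))) := by
  have du : HasDerivAt (fun s' => uu G (t, s')) (pdy (uu G) (t, s)) s :=
    slice2 (((contDiff_uu hG).differentiable (by simp)) (t, s))
  have dv : HasDerivAt (fun s' => vv G (t, s')) (pdy (vv G) (t, s)) s :=
    slice2 (((contDiff_vv hG).differentiable (by simp)) (t, s))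
  have dpu : HasDerivAt (fun s' => pdx (uu G) (t, s')) (pdy (pdx (uu G)) (t, s)) s :=
    slice2 (((contDiff_pdx (contDiff_uu hG)).differentiable (by simp)) (t, s))
  have dpv : HasDerivAt (fun s' => pdx (vv G) (t, s')) (pdy (pdx (vv G)) (t, s)) s :=
    slice2 (((contDiff_pdx (contDiff_vv hG)).differentiable (by simp)) (t, s))
  have dE : HasDerivAt (fun s' => EE G f (t, s')) (pdy (EE G f) (t, s)) s :=
    slice2 (((contDiff_EE hG hf).differentiable (by simp)) (t, s))
  exact pdy_eq (((contDiff_BB hG hf).differentiable (by simp)) (t, s))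
    ((dE.const_mul 2).add ((du.mul dpv).sub (dv.mul dpu)))

lemma key_identity (hG : ContDiff ℝ (⊤ : ℕ∞) (fun q : ℝ × (ℝ × ℝ) => G q.1 q.2))
    (hf : ContDiff ℝ (⊤ : ℕ∞) (fun q : ℝ × (ℝ × ℝ) => f q.1 q.2))
    (hfH : ∀ t ∈ Icc (0:ℝ) 1, ∀ p ∈ disk,
      pdx (f t) (G t p) = -(deriv (fun s => G s p) t).2 ∧
      pdy (f t) (G t p) = (deriv (fun s => G s p) t).1)
    {t s : ℝ} (ht : t ∈ Icc (0:ℝ) 1) (hs : ((s : ℝ), (0:ℝ)) ∈ disk) :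
    pdx (HH G) (t, s) = pdy (BB G f) (t, s) := by
  rw [pdx_HH hG, pdy_BB hG hf, pdy_EE hG hf hfH ht hs,
    clairaut (contDiff_uu hG) (t, s), clairaut (contDiff_vv hG) (t, s)]
  ring


lemma pdy_uu_eq (hG : ContDiff ℝ (⊤ : ℕ∞) (fun q : ℝ × (ℝ × ℝ) => G q.1 q.2)) (t s : ℝ) :
    pdy (uu G) (t, s) = pdx (fun q => (G t q).1) ((s : ℝ), (0 : ℝ)) := by
  have hd : DifferentiableAt ℝ (fun q => (G t q).1) ((s : ℝ), (0 : ℝ)) :=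
    ((contDiff_fst.comp (contDiff_Gt hG t)).differentiable (by simp)) _
  have hin : HasDerivAt (fun s' : ℝ => ((s' : ℝ), (0 : ℝ))) (((1 : ℝ), (0 : ℝ)) : ℝ × ℝ) s :=
    (hasDerivAt_id s).prodMk (hasDerivAt_const s 0)
  exact pdy_eq (((contDiff_uu hG).differentiable (by simp)) (t, s))
    (hd.hasFDerivAt.comp_hasDerivAt (f := fun s' : ℝ => ((s' : ℝ), (0 : ℝ))) s hin)

lemma pdy_vv_eq (hG : ContDiff ℝ (⊤ : ℕ∞) (fun q : ℝ × (ℝ × ℝ) => G q.1 q.2)) (t s : ℝ) :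
    pdy (vv G) (t, s) = pdx (fun q => (G t q).2) ((s : ℝ), (0 : ℝ)) := by
  have hd : DifferentiableAt ℝ (fun q => (G t q).2) ((s : ℝ), (0 : ℝ)) :=
    ((contDiff_snd.comp (contDiff_Gt hG t)).differentiable (by simp)) _
  have hin : HasDerivAt (fun s' : ℝ => ((s' : ℝ), (0 : ℝ))) (((1 : ℝ), (0 : ℝ)) : ℝ × ℝ) s :=
    (hasDerivAt_id s).prodMk (hasDerivAt_const s 0)
  exact pdy_eq (((contDiff_vv hG).differentiable (by simp)) (t, s))
    (hd.hasFDerivAt.comp_hasDerivAt (f := fun s' : ℝ => ((s' : ℝ), (0 : ℝ))) s hin)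

lemma circle_mem_disk (θ : ℝ) : ((Real.cos θ, Real.sin θ) : ℝ × ℝ) ∈ disk := by
  simp only [disk, Set.mem_setOf_eq]
  rw [Real.cos_sq_add_sin_sq]

lemma seg_mem_disk {s : ℝ} (h0 : 0 ≤ s) (h1 : s ≤ 1) : (((s:ℝ), (0:ℝ)) : ℝ × ℝ) ∈ disk := by
  simp only [disk, Set.mem_setOf_eq]
  nlinarith

variable {φ : ℝ → ℝ → ℝ}

/-- On `(0,1)`, the time derivative of `t' ↦ G t' (cos θ, sin θ)`. -/
lemma boundary_time_deriv (hφs : ContDiff ℝ (⊤ : ℕ∞) (fun q : ℝ × ℝ => φ q.1 q.2))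
    (hφb : ∀ t ∈ Icc (0:ℝ) 1, ∀ θ : ℝ,
      G t (Real.cos θ, Real.sin θ) = (Real.cos (φ t θ), Real.sin (φ t θ)))
    {t : ℝ} (ht : t ∈ Ioo (0:ℝ) 1) (θ : ℝ) :
    HasDerivAt (fun t' => G t' (Real.cos θ, Real.sin θ))
      ((-Real.sin (φ t θ) * pdx (fun q : ℝ × ℝ => φ q.1 q.2) (t, θ),
        Real.cos (φ t θ) * pdx (fun q : ℝ × ℝ => φ q.1 q.2) (t, θ)) : ℝ × ℝ) t := by
  have hφd : HasDerivAt (fun t' => φ t' θ) (pdx (fun q : ℝ × ℝ => φ q.1 q.2) (t, θ)) t :=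
    slice1 ((hφs.differentiable (by simp)) (t, θ))
  have hmodel : HasDerivAt (fun t' => ((Real.cos (φ t' θ), Real.sin (φ t' θ)) : ℝ × ℝ))
      ((-Real.sin (φ t θ) * pdx (fun q : ℝ × ℝ => φ q.1 q.2) (t, θ),
        Real.cos (φ t θ) * pdx (fun q : ℝ × ℝ => φ q.1 q.2) (t, θ)) : ℝ × ℝ) t :=
    (hφd.cos).prodMk (hφd.sin)
  refine hmodel.congr_of_eventuallyEq ?_
  have hmem : Ioo (0:ℝ) 1 ∈ nhds t := isOpen_Ioo.mem_nhds ht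
  filter_upwards [hmem] with t' ht'
  exact (hφb t' (Ioo_subset_Icc_self ht') θ)

/-- `θ ↦ f t (G t (cos θ, sin θ))` is constant, for `t ∈ (0,1)`. -/
lemma f_circle_const (hG : ContDiff ℝ (⊤ : ℕ∞) (fun q : ℝ × (ℝ × ℝ) => G q.1 q.2))
    (hf : ContDiff ℝ (⊤ : ℕ∞) (fun q : ℝ × (ℝ × ℝ) => f q.1 q.2))
    (hfH : ∀ t ∈ Icc (0:ℝ) 1, ∀ p ∈ disk,
      pdx (f t) (G t p) = -(deriv (fun s => G s p) t).2 ∧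
      pdy (f t) (G t p) = (deriv (fun s => G s p) t).1)
    (hφs : ContDiff ℝ (⊤ : ℕ∞) (fun q : ℝ × ℝ => φ q.1 q.2))
    (hφb : ∀ t ∈ Icc (0:ℝ) 1, ∀ θ : ℝ,
      G t (Real.cos θ, Real.sin θ) = (Real.cos (φ t θ), Real.sin (φ t θ)))
    {t : ℝ} (ht : t ∈ Ioo (0:ℝ) 1) (θ₁ θ₂ : ℝ) :
    f t (G t (Real.cos θ₁, Real.sin θ₁)) = f t (G t (Real.cos θ₂, Real.sin θ₂)) := by
  have htI : t ∈ Icc (0:ℝ) 1 := Ioo_subset_Icc_self ht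
  set Dt : ℝ → ℝ := fun θ => pdx (fun q : ℝ × ℝ => φ q.1 q.2) (t, θ) with hDt
  set c : ℝ → ℝ := fun θ => f t (Real.cos (φ t θ), Real.sin (φ t θ)) with hc
  have hceq : ∀ θ, f t (G t (Real.cos θ, Real.sin θ)) = c θ := by
    intro θ; rw [hφb t htI θ]
  have hcdiff : Differentiable ℝ c := by
    have : ContDiff ℝ (⊤ : ℕ∞) c := by
      apply (contDiff_ft hf t).comp
      exact ((Real.contDiff_cos.comp (hφs.comp (contDiff_const.prodMk contDiff_id))).prodMk
        (Real.contDiff_sin.comp (hφs.comp (contDiff_const.prodMk contDiff_id))))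
    exact this.differentiable (by simp)
  have hzero : ∀ θ, deriv c θ = 0 := by
    intro θ
    have hφd : HasDerivAt (fun θ' => φ t θ') (pdy (fun q : ℝ × ℝ => φ q.1 q.2) (t, θ)) θ :=
      slice2 ((hφs.differentiable (by simp)) (t, θ))
    set Dθ : ℝ := pdy (fun q : ℝ × ℝ => φ q.1 q.2) (t, θ) with hDθ
    have hmem : ((Real.cos θ, Real.sin θ) : ℝ × ℝ) ∈ disk := circle_mem_disk θ
    have hq : G t (Real.cos θ, Real.sin θ) = (Real.cos (φ t θ), Real.sin (φ t θ)) :=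
      hφb t htI θ
    have hdG := (boundary_time_deriv (G := G) hφs hφb ht θ).deriv
    obtain ⟨hx, hy⟩ := hfH t htI (Real.cos θ, Real.sin θ) hmem
    rw [hdG] at hx hy
    have hinner : HasDerivAt (fun θ' => ((Real.cos (φ t θ'), Real.sin (φ t θ')) : ℝ × ℝ))
        ((-Real.sin (φ t θ) * Dθ, Real.cos (φ t θ) * Dθ) : ℝ × ℝ) θ :=
      (hφd.cos).prodMk (hφd.sin)
    have hft : DifferentiableAt ℝ (f t) ((Real.cos (φ t θ), Real.sin (φ t θ)) : ℝ × ℝ) :=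
      ((contDiff_ft hf t).differentiable (by simp)) _
    have hcd : HasDerivAt c
        (fderiv ℝ (f t) ((Real.cos (φ t θ), Real.sin (φ t θ)) : ℝ × ℝ)
          ((-Real.sin (φ t θ) * Dθ, Real.cos (φ t θ) * Dθ) : ℝ × ℝ)) θ :=
      hft.hasFDerivAt.comp_hasDerivAt θ hinner
    have hval := clm_eval (fderiv ℝ (f t) ((Real.cos (φ t θ), Real.sin (φ t θ)) : ℝ × ℝ))
      (-Real.sin (φ t θ) * Dθ) (Real.cos (φ t θ) * Dθ)
    rw [hcd.deriv, hval]
    have hx' : pdx (f t) ((Real.cos (φ t θ), Real.sin (φ t θ)) : ℝ × ℝ)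
        = -(Real.cos (φ t θ) * Dt θ) := by rw [← hq]; exact hx
    have hy' : pdy (f t) ((Real.cos (φ t θ), Real.sin (φ t θ)) : ℝ × ℝ)
        = -Real.sin (φ t θ) * Dt θ := by rw [← hq]; exact hy
    show -Real.sin (φ t θ) * Dθ * pdx (f t) ((Real.cos (φ t θ), Real.sin (φ t θ)) : ℝ × ℝ)
        + Real.cos (φ t θ) * Dθ * pdy (f t) ((Real.cos (φ t θ), Real.sin (φ t θ)) : ℝ × ℝ) = 0
    rw [hx', hy']
    ring
  rw [hceq θ₁, hceq θ₂]
  exact is_const_of_deriv_eq_zero hcdiff hzero θ₁ θ₂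

lemma lift_shift (hφb : ∀ θ : ℝ, φ t (θ + 2 * π) = φ t θ + 2 * π) (n : ℕ) :
    φ t (2 * π * n) = φ t 0 + 2 * π * n ∧ φ t (-(2 * π * n)) = φ t 0 - 2 * π * n := by
  induction n with
  | zero => simp
  | succ n ih =>
    constructor
    · have : (2 : ℝ) * π * (n + 1) = 2 * π * n + 2 * π := by ring
      rw [Nat.cast_succ, this, hφb, ih.1]; ring
    · have h2 : (-(2 * π * ((n:ℝ) + 1)) + 2 * π) = -(2 * π * n) := by ring
      have := hφb (-(2 * π * ((n:ℝ) + 1)))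
      rw [h2, ih.2] at this
      rw [Nat.cast_succ]
      linarith

lemma exists_lift_zero (hφs : ContDiff ℝ (⊤ : ℕ∞) (fun q : ℝ × ℝ => φ q.1 q.2))
    (hφb : ∀ θ : ℝ, φ t (θ + 2 * π) = φ t θ + 2 * π) :
    ∃ θ₀ : ℝ, φ t θ₀ = 0 := by
  obtain ⟨n, hn⟩ := exists_nat_ge (|φ t 0| / (2 * π))
  have hπ : (0:ℝ) < 2 * π := by positivity
  have hn' : |φ t 0| ≤ 2 * π * n := by
    rw [div_le_iff₀ hπ] at hn
    linarith [hn]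
  have hcont : Continuous (φ t) := by
    have : Continuous (fun θ => φ t θ) :=
      ((hφs.continuous).comp (continuous_const.prodMk continuous_id))
    exact this
  have hle : -(2 * π * (n:ℝ)) ≤ 2 * π * n := by
    have : (0:ℝ) ≤ 2 * π * n := by positivity
    linarith
  have hIVT := intermediate_value_Icc hle (hcont.continuousOn)
  have h0mem : (0:ℝ) ∈ Icc (φ t (-(2 * π * n))) (φ t (2 * π * n)) := by
    obtain ⟨h1, h2⟩ := lift_shift (t := t) hφb n
    rw [h1, h2]
    have h3 : φ t 0 ≤ |φ t 0| := le_abs_self _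
    have h4 : -|φ t 0| ≤ φ t 0 := neg_abs_le _
    constructor <;> linarith
  obtain ⟨θ₀, _, hθ₀⟩ := hIVT h0mem
  exact ⟨θ₀, hθ₀⟩


lemma f_at_Gt_one (hG : ContDiff ℝ (⊤ : ℕ∞) (fun q : ℝ × (ℝ × ℝ) => G q.1 q.2))
    (hf : ContDiff ℝ (⊤ : ℕ∞) (fun q : ℝ × (ℝ × ℝ) => f q.1 q.2))
    (hfH : ∀ t ∈ Icc (0:ℝ) 1, ∀ p ∈ disk,
      pdx (f t) (G t p) = -(deriv (fun s => G s p) t).2 ∧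
      pdy (f t) (G t p) = (deriv (fun s => G s p) t).1)
    (hφs : ContDiff ℝ (⊤ : ℕ∞) (fun q : ℝ × ℝ => φ q.1 q.2))
    (hφb : ∀ t ∈ Icc (0:ℝ) 1, ∀ θ : ℝ,
      G t (Real.cos θ, Real.sin θ) = (Real.cos (φ t θ), Real.sin (φ t θ)))
    (hφper : ∀ t ∈ Icc (0:ℝ) 1, ∀ θ : ℝ, φ t (θ + 2 * π) = φ t θ + 2 * π)
    {t : ℝ} (ht : t ∈ Ioo (0:ℝ) 1) :
    f t (G t ((1 : ℝ), (0 : ℝ))) = f t ((1 : ℝ), (0 : ℝ)) := by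
  have htI : t ∈ Icc (0:ℝ) 1 := Ioo_subset_Icc_self ht
  obtain ⟨θ₀, hθ₀⟩ := exists_lift_zero (t := t) hφs (hφper t htI)
  have h10 : ((Real.cos 0, Real.sin 0) : ℝ × ℝ) = ((1:ℝ), (0:ℝ)) := by simp
  have hc := f_circle_const hG hf hfH hφs hφb ht 0 θ₀
  rw [h10] at hc
  rw [hc, hφb t htI θ₀, hθ₀, h10]

lemma BB_at_zero (hGo : ∀ t ∈ Icc (0:ℝ) 1, G t ((0:ℝ), (0:ℝ)) = ((0:ℝ), (0:ℝ)))
    (hf0 : ∀ t ∈ Icc (0:ℝ) 1, f t ((0:ℝ), (0:ℝ)) = 0)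
    {t : ℝ} (ht : t ∈ Icc (0:ℝ) 1) : BB G f (t, 0) = 0 := by
  have hu : uu G (t, 0) = 0 := by
    show (G t ((0:ℝ), (0:ℝ))).1 = 0
    rw [hGo t ht]
  have hv : vv G (t, 0) = 0 := by
    show (G t ((0:ℝ), (0:ℝ))).2 = 0
    rw [hGo t ht]
  have hE : EE G f (t, 0) = 0 := by
    show f t (G t ((0:ℝ), (0:ℝ))) = 0
    rw [hGo t ht]; exact hf0 t ht
  show 2 * EE G f (t, 0) + (uu G (t, 0) * pdx (vv G) (t, 0) - vv G (t, 0) * pdx (uu G) (t, 0)) = 0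
  rw [hu, hv, hE]; ring

lemma HH_at_zero (hG : ContDiff ℝ (⊤ : ℕ∞) (fun q : ℝ × (ℝ × ℝ) => G q.1 q.2))
    (hid : ∀ p ∈ disk, G 0 p = p) {s : ℝ} (hs : s ∈ Ico (0:ℝ) 1) : HH G (0, s) = 0 := by
  have hv : vv G (0, s) = 0 := by
    show (G 0 ((s:ℝ), (0:ℝ))).2 = 0
    rw [hid _ (seg_mem_disk hs.1 hs.2.le)]
  have hpv : pdy (vv G) (0, s) = 0 := by
    refine pdy_eq (((contDiff_vv hG).differentiable (by simp)) (0, s)) ?_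
    refine (hasDerivAt_const s (0:ℝ)).congr_of_eventuallyEq ?_
    have hmem : Ioo (-1 : ℝ) 1 ∈ nhds s :=
      isOpen_Ioo.mem_nhds ⟨by linarith [hs.1], hs.2⟩
    filter_upwards [hmem] with s' hs'
    show (G 0 ((s':ℝ), (0:ℝ))).2 = 0
    have hd : ((s':ℝ), (0:ℝ)) ∈ disk := by
      simp only [disk, Set.mem_setOf_eq]
      nlinarith [hs'.1, hs'.2]
    rw [hid _ hd]
  show uu G (0, s) * pdy (vv G) (0, s) - vv G (0, s) * pdy (uu G) (0, s) = 0
  rw [hv, hpv]; ring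

lemma sigma_rewrite (hG : ContDiff ℝ (⊤ : ℕ∞) (fun q : ℝ × (ℝ × ℝ) => G q.1 q.2)) :
    sigmaQ (G 1) = (1 / 2) * ∫ s in (0:ℝ)..1, HH G (1, s) := by
  unfold sigmaQ
  congr 1
  refine intervalIntegral.integral_congr (fun s _ => ?_)
  show (G 1 (s, 0)).1 * pdx (fun q => (G 1 q).2) (s, 0)
      - (G 1 (s, 0)).2 * pdx (fun q => (G 1 q).1) (s, 0) = HH G (1, s)
  show _ = uu G (1, s) * pdy (vv G) (1, s) - vv G (1, s) * pdy (uu G) (1, s)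
  rw [pdy_vv_eq hG 1 s, pdy_uu_eq hG 1 s]
  rfl

lemma BB_at_one (hG : ContDiff ℝ (⊤ : ℕ∞) (fun q : ℝ × (ℝ × ℝ) => G q.1 q.2))
    (hf : ContDiff ℝ (⊤ : ℕ∞) (fun q : ℝ × (ℝ × ℝ) => f q.1 q.2))
    (hfH : ∀ t ∈ Icc (0:ℝ) 1, ∀ p ∈ disk,
      pdx (f t) (G t p) = -(deriv (fun s => G s p) t).2 ∧
      pdy (f t) (G t p) = (deriv (fun s => G s p) t).1)
    (hφs : ContDiff ℝ (⊤ : ℕ∞) (fun q : ℝ × ℝ => φ q.1 q.2))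
    (hφb : ∀ t ∈ Icc (0:ℝ) 1, ∀ θ : ℝ,
      G t (Real.cos θ, Real.sin θ) = (Real.cos (φ t θ), Real.sin (φ t θ)))
    (hφper : ∀ t ∈ Icc (0:ℝ) 1, ∀ θ : ℝ, φ t (θ + 2 * π) = φ t θ + 2 * π)
    {t : ℝ} (ht : t ∈ Ioo (0:ℝ) 1) :
    BB G f (t, 1) = 2 * f t ((1:ℝ), (0:ℝ)) + deriv (fun t' => φ t' 0) t := by
  have htI : t ∈ Icc (0:ℝ) 1 := Ioo_subset_Icc_self ht
  have h10 : ((Real.cos 0, Real.sin 0) : ℝ × ℝ) = ((1:ℝ), (0:ℝ)) := by simp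
  have hψd : HasDerivAt (fun t' => φ t' 0) (pdx (fun q : ℝ × ℝ => φ q.1 q.2) (t, 0)) t :=
    slice1 ((hφs.differentiable (by simp)) (t, 0))
  set D : ℝ := pdx (fun q : ℝ × ℝ => φ q.1 q.2) (t, 0) with hD
  have hevu : (fun t' => uu G (t', 1)) =ᶠ[nhds t] (fun t' => Real.cos (φ t' 0)) := by
    filter_upwards [isOpen_Ioo.mem_nhds ht] with t' ht'
    show (G t' ((1:ℝ), (0:ℝ))).1 = _
    rw [← h10, hφb t' (Ioo_subset_Icc_self ht') 0]
  have hevv : (fun t' => vv G (t', 1)) =ᶠ[nhds t] (fun t' => Real.sin (φ t' 0)) := by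
    filter_upwards [isOpen_Ioo.mem_nhds ht] with t' ht'
    show (G t' ((1:ℝ), (0:ℝ))).2 = _
    rw [← h10, hφb t' (Ioo_subset_Icc_self ht') 0]
  have hpu : pdx (uu G) (t, 1) = -Real.sin (φ t 0) * D :=
    pdx_eq (((contDiff_uu hG).differentiable (by simp)) (t, 1))
      ((hψd.cos).congr_of_eventuallyEq hevu)
  have hpv : pdx (vv G) (t, 1) = Real.cos (φ t 0) * D :=
    pdx_eq (((contDiff_vv hG).differentiable (by simp)) (t, 1))
      ((hψd.sin).congr_of_eventuallyEq hevv)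
  have hu : uu G (t, 1) = Real.cos (φ t 0) := by
    show (G t ((1:ℝ), (0:ℝ))).1 = _
    rw [← h10, hφb t htI 0]
  have hv : vv G (t, 1) = Real.sin (φ t 0) := by
    show (G t ((1:ℝ), (0:ℝ))).2 = _
    rw [← h10, hφb t htI 0]
  have hE : EE G f (t, 1) = f t ((1:ℝ), (0:ℝ)) := by
    show f t (G t ((1:ℝ), (0:ℝ))) = _
    exact f_at_Gt_one hG hf hfH hφs hφb hφper ht
  have hderψ : deriv (fun t' => φ t' 0) t = D := hψd.deriv
  show 2 * EE G f (t, 1) + (uu G (t, 1) * pdx (vv G) (t, 1) - vv G (t, 1) * pdx (uu G) (t, 1))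
      = 2 * f t ((1:ℝ), (0:ℝ)) + deriv (fun t' => φ t' 0) t
  rw [hE, hu, hv, hpu, hpv, hderψ]
  linear_combination D * Real.sin_sq_add_cos_sq (φ t 0)

end main

end Stmt11

open Stmt11

/-- for a smooth isotopy `(g_t)` in `G_o` with `g_0 = id`,
Hamiltonians `f_t` normalized by `f_t(0,0) = 0`, `S((g_t)) = ∫₀¹ f_t(1,0) dt`,
and the lift `φ̃` of the boundary isotopy with `φ̃_0 = id`, one has
`σ(g₁) - S((g_t)) = φ̃₁(0)/2`. -/
theorem sigma_sub_S_eq_half_lift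
    (G : ℝ → ℝ × ℝ → ℝ × ℝ) (f : ℝ → ℝ × ℝ → ℝ) (φ : ℝ → ℝ → ℝ)
    (hG : IsIsotopy G) (hGo : ∀ t ∈ Icc (0:ℝ) 1, G t (0, 0) = (0, 0))
    (hf : IsHam G f) (hf0 : ∀ t ∈ Icc (0:ℝ) 1, f t (0, 0) = 0)
    (hφ : IsBoundaryLift G φ) :
    sigmaQ (G 1) - (∫ t in (0:ℝ)..1, f t (1, 0)) = φ 1 0 / 2 := by
  obtain ⟨hGs, _hGsymp, hGid⟩ := hG
  obtain ⟨hfs, hfH⟩ := hf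
  obtain ⟨hφs, hφmp, hφ0, hφb⟩ := hφ
  have hφper : ∀ t ∈ Icc (0:ℝ) 1, ∀ θ : ℝ, φ t (θ + 2 * π) = φ t θ + 2 * π :=
    fun t ht => (hφmp t ht).2
  have h01 : (0:ℝ) ≤ 1 := by norm_num
  have hae1 : ∀ᵐ x : ℝ ∂(volume : Measure ℝ), x ≠ 1 :=
    measure_eq_zero_iff_ae_notMem.mp (measure_singleton (1:ℝ))
  have hHx_cont : Continuous (pdx (HH G)) := (contDiff_pdx (contDiff_HH hGs)).continuous
  have hBy_cont : Continuous (pdy (BB G f)) :=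
    (contDiff_pdy (contDiff_BB hGs hfs)).continuous
  -- ψ and its derivative
  have hψd : ∀ t : ℝ, HasDerivAt (fun t' => φ t' 0)
      (pdx (fun q : ℝ × ℝ => φ q.1 q.2) (t, 0)) t :=
    fun t => slice1 ((hφs.differentiable (by simp)) (t, 0))
  have hψderiv : deriv (fun t' => φ t' 0) = fun t => pdx (fun q : ℝ × ℝ => φ q.1 q.2) (t, 0) :=
    funext fun t => (hψd t).deriv
  -- Step A
  have hσ : sigmaQ (G 1) = (1 / 2) * ∫ s in (0:ℝ)..1, HH G (1, s) := sigma_rewrite hGs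
  -- Step B : FTC in time
  have hFTCt : ∀ s : ℝ, (∫ t in (0:ℝ)..1, pdx (HH G) (t, s)) = HH G (1, s) - HH G (0, s) := by
    intro s
    refine intervalIntegral.integral_eq_sub_of_hasDerivAt
      (fun t _ => slice1 (((contDiff_HH hGs).differentiable (by simp)) (t, s))) ?_
    exact (hHx_cont.comp (continuous_id.prodMk continuous_const)).intervalIntegrable 0 1
  -- Step C : split the difference
  have hHH1int : IntervalIntegrable (fun s => HH G (1, s)) volume 0 1 :=
    ((contDiff_HH hGs).continuous.comp (continuous_const.prodMk continuous_id)).intervalIntegrable 0 1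
  have hHH0int : IntervalIntegrable (fun s => HH G (0, s)) volume 0 1 :=
    ((contDiff_HH hGs).continuous.comp (continuous_const.prodMk continuous_id)).intervalIntegrable 0 1
  have hsplit : (∫ s in (0:ℝ)..1, HH G (1, s)) - (∫ s in (0:ℝ)..1, HH G (0, s))
      = ∫ s in (0:ℝ)..1, ∫ t in (0:ℝ)..1, pdx (HH G) (t, s) := by
    rw [← intervalIntegral.integral_sub hHH1int hHH0int]
    exact intervalIntegral.integral_congr (fun s _ => (hFTCt s).symm)
  -- Step D : the t = 0 slice integrates to zero
  have hH0 : (∫ s in (0:ℝ)..1, HH G (0, s)) = 0 := by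
    have : (∫ s in (0:ℝ)..1, HH G (0, s)) = ∫ s in (0:ℝ)..1, (0:ℝ) := by
      refine intervalIntegral.integral_congr_ae ?_
      filter_upwards [hae1] with s hs hmem
      rw [Set.uIoc_of_le h01] at hmem
      exact HH_at_zero hGs hGid ⟨hmem.1.le, lt_of_le_of_ne hmem.2 hs⟩
    rw [this]
    simp
  -- Step E : Fubini
  have hfub : (∫ s in (0:ℝ)..1, ∫ t in (0:ℝ)..1, pdx (HH G) (t, s))
      = ∫ t in (0:ℝ)..1, ∫ s in (0:ℝ)..1, pdx (HH G) (t, s) := by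
    simp_rw [intervalIntegral.integral_of_le h01]
    have hint : Integrable (Function.uncurry fun s t => pdx (HH G) (t, s))
        ((volume.restrict (Ioc (0:ℝ) 1)).prod (volume.restrict (Ioc (0:ℝ) 1))) := by
      rw [Measure.prod_restrict, ← Measure.volume_eq_prod]
      have hc : Continuous (fun z : ℝ × ℝ => pdx (HH G) (z.2, z.1)) :=
        hHx_cont.comp (continuous_snd.prodMk continuous_fst)
      have hcomp : IntegrableOn (fun z : ℝ × ℝ => pdx (HH G) (z.2, z.1))
          (Icc (0:ℝ) 1 ×ˢ Icc (0:ℝ) 1) volume :=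
        hc.continuousOn.integrableOn_compact (isCompact_Icc.prod isCompact_Icc)
      exact hcomp.mono_set (Set.prod_mono Ioc_subset_Icc_self Ioc_subset_Icc_self)
    exact MeasureTheory.integral_integral_swap hint
  -- Step F : inner integral in s
  have hinner : ∀ t ∈ Icc (0:ℝ) 1,
      (∫ s in (0:ℝ)..1, pdx (HH G) (t, s)) = BB G f (t, 1) := by
    intro t ht
    have h1 : (∫ s in (0:ℝ)..1, pdx (HH G) (t, s)) = ∫ s in (0:ℝ)..1, pdy (BB G f) (t, s) := by
      refine intervalIntegral.integral_congr (fun s hs => ?_)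
      rw [Set.uIcc_of_le h01] at hs
      exact key_identity hGs hfs hfH ht (seg_mem_disk hs.1 hs.2)
    have h2 : (∫ s in (0:ℝ)..1, pdy (BB G f) (t, s)) = BB G f (t, 1) - BB G f (t, 0) :=
      intervalIntegral.integral_eq_sub_of_hasDerivAt
        (fun s _ => slice2 (((contDiff_BB hGs hfs).differentiable (by simp)) (t, s)))
        ((hBy_cont.comp (continuous_const.prodMk continuous_id)).intervalIntegrable 0 1)
    rw [h1, h2, BB_at_zero hGo hf0 ht, sub_zero]
  -- Step G : outer integral rewrite
  have houter : (∫ t in (0:ℝ)..1, ∫ s in (0:ℝ)..1, pdx (HH G) (t, s))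
      = ∫ t in (0:ℝ)..1, BB G f (t, 1) :=
    intervalIntegral.integral_congr
      (fun t ht => hinner t (by rwa [Set.uIcc_of_le h01] at ht))
  -- Step H : value at the boundary point
  have hB1 : (∫ t in (0:ℝ)..1, BB G f (t, 1))
      = ∫ t in (0:ℝ)..1, (2 * f t ((1:ℝ), (0:ℝ)) + deriv (fun t' => φ t' 0) t) := by
    refine intervalIntegral.integral_congr_ae ?_
    filter_upwards [hae1] with t htne hmem
    rw [Set.uIoc_of_le h01] at hmem
    exact BB_at_one hGs hfs hfH hφs hφb hφper ⟨hmem.1, lt_of_le_of_ne hmem.2 htne⟩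
  -- Step I : split the last integral
  have hfint : IntervalIntegrable (fun t => 2 * f t ((1:ℝ), (0:ℝ))) volume 0 1 :=
    (continuous_const.mul (hfs.continuous.comp
      (continuous_id.prodMk continuous_const))).intervalIntegrable 0 1
  have hdint : IntervalIntegrable (deriv (fun t' => φ t' 0)) volume 0 1 := by
    rw [hψderiv]
    exact ((contDiff_pdx hφs).continuous.comp
      (continuous_id.prodMk continuous_const)).intervalIntegrable 0 1
  have hFTCψ : (∫ t in (0:ℝ)..1, deriv (fun t' => φ t' 0) t) = φ 1 0 - φ 0 0 :=
    intervalIntegral.integral_eq_sub_of_hasDerivAt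
      (fun t _ => ((hψd t).differentiableAt).hasDerivAt) hdint
  have hsplit2 : (∫ t in (0:ℝ)..1, (2 * f t ((1:ℝ), (0:ℝ)) + deriv (fun t' => φ t' 0) t))
      = 2 * (∫ t in (0:ℝ)..1, f t ((1:ℝ), (0:ℝ))) + (φ 1 0 - φ 0 0) := by
    rw [intervalIntegral.integral_add hfint hdint, hFTCψ, intervalIntegral.integral_const_mul]
  have hφ00 : φ 0 0 = 0 := hφ0 0
  have hfinal : (∫ s in (0:ℝ)..1, HH G (1, s))
      = 2 * (∫ t in (0:ℝ)..1, f t ((1:ℝ), (0:ℝ))) + φ 1 0 := by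
    have := hsplit
    rw [hH0, sub_zero] at this
    rw [this, hfub, houter, hB1, hsplit2, hφ00, sub_zero]
  rw [hσ, hfinal]
  ring
end
end
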